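/- arXiv:1810.02238 — 13 statements merged into one kernel-verified Lean document; each statement's English description precedes it below -/
import Mathlib

section
/- Let R be an integral domain and I a nonzero ideal of R of finite index. For every nonzero element x of the fraction field of R with xR ⊆ R, one has [R : xR]·[R : I] = [R : xI]. -/
/-! Multiplication by the non-zero-divisor `y` is an additive isomorphism `R ≃ yR` carrying `I` onto
`yI`, so `[yR : yI] = [R : I]`, and indices multiply along the tower `yI ≤ yR ≤ R`. -/

namespace Ideal

variable {R : Type*} [CommRing R]

theorem toAddSubgroup_span_singleton_mul (y : R) (I : Ideal R) :
    (span {y} * I).toAddSubgroup = I.toAddSubgroup.map (AddMonoidHom.mulLeft y) := by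
  ext x
  simp [mem_span_singleton_mul]

theorem relIndex_span_singleton_mul {y : R} (hy : IsLeftRegular y) (I : Ideal R) :
    (span {y} * I).toAddSubgroup.relIndex (span {y}).toAddSubgroup = I.toAddSubgroup.index := by
  nth_rw 2 [← mul_top (span {y})]
  rw [toAddSubgroup_span_singleton_mul, toAddSubgroup_span_singleton_mul,
    AddSubgroup.relIndex_map_map_of_injective _ _ hy, Submodule.top_toAddSubgroup,
    AddSubgroup.relIndex_top_right]

theorem card_quotient_span_singleton_mul {y : R} (hy : IsLeftRegular y) (I : Ideal R) :
    Nat.card (R ⧸ span {y} * I) = Nat.card (R ⧸ span {y}) * Nat.card (R ⧸ I) := by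
  have h := AddSubgroup.relIndex_mul_index
    (Submodule.toAddSubgroup_mono (mul_le_left : span {y} * I ≤ span {y}))
  rw [relIndex_span_singleton_mul hy, mul_comm] at h
  exact h.symm

end Ideal

theorem stmt0_general (R : Type*) [CommRing R] [IsDomain R] (I : Ideal R)
    (x : FractionRing R) (hx : x ≠ 0)
    (y : R) (hy : algebraMap R (FractionRing R) y = x) :
    Nat.card (R ⧸ Ideal.span {y}) * Nat.card (R ⧸ I) =
      Nat.card (R ⧸ Ideal.span {y} * I) := by
  have hy0 : y ≠ 0 := by
    rintro rfl
    exact hx (by simpa using hy.symm)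
  exact (Ideal.card_quotient_span_singleton_mul (mul_right_injective₀ hy0) I).symm

/-- Let `R` be an integral domain and `I` a nonzero ideal of finite index. For every nonzero
`x` in the fraction field of `R` with `x·R ⊆ R` (i.e. `x` is the image of some `y : R`),
one has `[R : xR]·[R : I] = [R : xI]`. -/
theorem stmt0 (R : Type*) [CommRing R] [IsDomain R] (I : Ideal R) (hI : I ≠ ⊥)
    (hfin : Finite (R ⧸ I)) (x : FractionRing R) (hx : x ≠ 0)
    (hxR : ∀ r : R, ∃ s : R, x * algebraMap R (FractionRing R) r
      = algebraMap R (FractionRing R) s)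
    (y : R) (hy : algebraMap R (FractionRing R) y = x) :
    Nat.card (R ⧸ Ideal.span {y}) * Nat.card (R ⧸ I) =
      Nat.card (R ⧸ Ideal.span {y} * I) :=
  stmt0_general R I x hx y hy
end

section
/- Let R be an integral domain with finitely many maximal ideals. Then every invertible fractional ideal of R is principal. -/
/-- An integral domain with finitely many maximal ideals: every invertible fractional ideal
is principal. -/
theorem stmt1 (R : Type*) [CommRing R] [IsDomain R] [Finite (MaximalSpectrum R)]
    (K : Type*) [Field K] [Algebra R K] [IsFractionRing R K]
    (I : FractionalIdeal (nonZeroDivisors R) K) (hI : IsUnit I) :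
    ∃ x : K, I = FractionalIdeal.spanSingleton (nonZeroDivisors R) x := by
  have hf : {J : Ideal R | J.IsMaximal}.Finite := by
    have : Finite {J : Ideal R | J.IsMaximal} :=
      Finite.of_injective (fun J => (⟨J.1, J.2⟩ : MaximalSpectrum R))
        (fun a b h => Subtype.ext (congrArg MaximalSpectrum.asIdeal h))
    exact Set.toFinite _
  obtain ⟨u, hu⟩ := hI
  have hp : Submodule.IsPrincipal (I : Submodule R K) :=
    FractionalIdeal.isPrincipal.of_finite_maximals_of_inv le_rfl hf I (↑u⁻¹)
      (by rw [← hu]; exact u.mul_inv)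
  obtain ⟨x, hx⟩ := (FractionalIdeal.isPrincipal_iff I).mp hp
  exact ⟨x, hx⟩
end

section
/- Let R be a number ring (a subring of a number field), I an invertible ideal of R, and J any nonzero ideal of R. Then N(I)·N(J) = N(IJ), where N denotes the index in R. -/
/-!
If `I` is invertible and `R ⧸ J` is finite, choose `x ∈ I` avoiding, via the Chinese remainder
theorem, the ideals `{y | y • I⁻¹ ⊆ m}` for the finitely many maximal `m ⊇ J`. Then
`C = x • I⁻¹` is an integral ideal coprime to `J` with `I * C = (x)`, hence `I = (x) + I * J`
and `r * x ∈ I * J ↔ r ∈ J`: multiplication by `x` identifies `R ⧸ J` with `I ⧸ I * J`, and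
`[R : I * J] = [R : I] [I : I * J]`. If `R ⧸ J` is infinite, so is `R ⧸ I * J`, and both sides
vanish under the `Nat.card` convention.
-/

open scoped nonZeroDivisors
open Function IsLocalization

theorem Submodule.exists_mem_forall_notMem_of_smul_le {A X ι : Type*} [CommRing A]
    [AddCommGroup X] [Module A X] [Finite ι] {M : ι → Ideal A} (hM : Pairwise (IsCoprime on M))
    {N : Submodule A X} {P : ι → Submodule A X} (hMP : ∀ i, M i • N ≤ P i)
    (hNP : ∀ i, ¬N ≤ P i) : ∃ x ∈ N, ∀ i, x ∉ P i := by
  classical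
  have := Fintype.ofFinite ι
  choose a haN haP using fun i => SetLike.not_le_iff_exists.mp (hNP i)
  choose e he using fun j => Ideal.exists_forall_sub_mem_ideal hM
    fun i => if i = j then (1 : A) else 0
  refine ⟨∑ j, e j • a j, sum_mem fun j _ => N.smul_mem _ (haN j), fun i hi => haP i ?_⟩
  have hdiff : ∑ j, e j • a j - a i ∈ M i • N := by
    have : ∑ j, e j • a j - a i = ∑ j, (e j - if i = j then 1 else 0) • a j := by
      simp [sub_smul, Finset.sum_sub_distrib]
    rw [this]
    exact sum_mem fun j _ => smul_mem_smul (he j i) (haN j)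
  simpa using sub_mem hi (hMP i hdiff)

namespace Ideal

section CommRing

variable {A : Type*} [CommRing A]

theorem finite_setOf_le (J : Ideal A) [Finite (A ⧸ J)] : {m : Ideal A | J ≤ m}.Finite :=
  (Set.finite_range (comap (Quotient.mk J))).subset fun _ hm => ⟨_, comap_map_mk hm⟩

theorem eq_span_singleton_sup_mul_of_mul_eq {I J C : Ideal A} {x : A}
    (hIC : I * C = span {x}) (hCJ : C ⊔ J = ⊤) : I = span {x} ⊔ I * J := by
  conv_lhs => rw [← I.mul_top, ← hCJ, mul_sup, hIC]

theorem card_quotient_mul_of_eq_span_singleton_sup {I J : Ideal A} {x : A}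
    (hspan : I = span {x} ⊔ I * J) (hker : ∀ r, r * x ∈ I * J → r ∈ J) :
    Nat.card (A ⧸ I) * Nat.card (A ⧸ J) = Nat.card (A ⧸ (I * J)) := by
  let f := (I * J).mkQ ∘ₗ LinearMap.toSpanSingleton A A x
  have hx : x ∈ I := hspan ▸ mem_sup_left (mem_span_singleton_self x)
  have hker_f : LinearMap.ker f = J := by
    ext r
    simp only [f, LinearMap.mem_ker, LinearMap.comp_apply, LinearMap.toSpanSingleton_apply,
      Submodule.mkQ_apply, Submodule.Quotient.mk_eq_zero, smul_eq_mul]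
    exact ⟨hker r, fun hr => mul_comm x r ▸ mul_mem_mul hx hr⟩
  have hrange_f : LinearMap.range f = Submodule.map (I * J).mkQ I := by
    rw [LinearMap.range_comp, ← LinearMap.span_singleton_eq_range,
      congrArg (Submodule.map _) hspan, Submodule.map_sup, Submodule.mkQ_map_self, sup_bot_eq]
  have hcardJ : Nat.card (A ⧸ J) = Nat.card (Submodule.map (I * J).mkQ I) :=
    Nat.card_congr ((Submodule.quotEquivOfEq _ _ hker_f.symm).trans
      (f.quotKerEquivRange.trans (LinearEquiv.ofEq _ _ hrange_f))).toEquiv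
  rw [mul_comm, hcardJ, Submodule.card_quotient_mul_card_quotient I (I * J) mul_le_left]

end CommRing

section FractionRing

variable {A K : Type*} [CommRing A] [CommRing K] [Algebra A K]

section Inverse

variable {I : Ideal A} {I' : Submodule A K} (hII' : coeSubmodule K I * I' = 1)
include hII'

theorem smul_le_colon_of_mul_eq_one (m : Ideal A) : m • I ≤ (coeSubmodule K m).colon I' := by
  refine Submodule.smul_le.mpr fun r hr y hy => Submodule.mem_colon.mpr fun b hb => ?_
  obtain ⟨c, hc⟩ := Submodule.mem_one.mp
    (hII' ▸ Submodule.mul_mem_mul ((mem_coeSubmodule K I).mpr ⟨y, hy, rfl⟩) hb)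
  have : (r • y) • b = algebraMap A K (r * c) := by
    rw [map_mul, hc, Algebra.smul_def, smul_eq_mul, map_mul, mul_assoc]
  exact this ▸ (mem_coeSubmodule K m).mpr ⟨r * c, m.mul_mem_right c hr, rfl⟩

variable [IsFractionRing A K]

theorem not_le_colon_of_mul_eq_one {m : Ideal A} (hm : m ≠ ⊤) :
    ¬I ≤ (coeSubmodule K m).colon I' := fun hle => by
  refine hm (top_le_iff.mp ((IsFractionRing.coeSubmodule_le_coeSubmodule (K := K)).mp ?_))
  rw [coeSubmodule_top, ← hII', Submodule.mul_le]
  rintro _ hu b hb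
  obtain ⟨y, hy, rfl⟩ := (mem_coeSubmodule K I).mp hu
  exact Algebra.smul_def y b ▸ Submodule.mem_colon.mp (hle hy) b hb

theorem exists_mul_eq_span_singleton_sup_eq_top_of_mul_eq_one (J : Ideal A) [Finite (A ⧸ J)] :
    ∃ x C, I * C = span {x} ∧ C ⊔ J = ⊤ := by
  let M : Type _ := {m : Ideal A // m.IsMaximal ∧ J ≤ m}
  have : Finite M := ((finite_setOf_le J).subset fun _ hm => hm.2).to_subtype
  obtain ⟨x, hxI, hx⟩ := Submodule.exists_mem_forall_notMem_of_smul_le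
    (M := fun m : M => m.1) (P := fun m => (coeSubmodule K m.1).colon I')
    (fun m m' hne => isCoprime_iff_sup_eq.mpr
      (m.2.1.coprime_of_ne m'.2.1 (Subtype.coe_ne_coe.mpr hne)))
    (fun m => smul_le_colon_of_mul_eq_one hII' m.1)
    (fun m => not_le_colon_of_mul_eq_one hII' m.2.1.ne_top)
  let C : Ideal A :=
    Submodule.comap (Algebra.linearMap A K) (Submodule.span A {algebraMap A K x} * I')
  have hC : coeSubmodule K C = Submodule.span A {algebraMap A K x} * I' := by
    refine Submodule.map_comap_eq_self ?_
    rw [← Submodule.one_eq_range, ← hII']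
    exact mul_le_mul_left
      ((Submodule.span_singleton_le_iff_mem _ _).mpr ((mem_coeSubmodule K I).mpr ⟨x, hxI, rfl⟩)) _
  refine ⟨x, C, IsFractionRing.coeSubmodule_injective A K ?_, ?_⟩
  · rw [coeSubmodule_mul, hC, coeSubmodule_span_singleton, mul_left_comm, hII', mul_one]
  · by_contra h
    obtain ⟨m, hm, hle⟩ := exists_le_maximal _ h
    refine hx ⟨m, hm, le_sup_right.trans hle⟩ (Submodule.mem_colon.mpr fun b hb => ?_)
    have : algebraMap A K x * b ∈ coeSubmodule K C :=
      hC ▸ Submodule.mul_mem_mul (Submodule.mem_span_singleton_self _) hb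
    exact Algebra.smul_def x b ▸ coeSubmodule_mono K (le_sup_left.trans hle) this

end Inverse

variable {I : Ideal A} (hI : IsUnit (I : FractionalIdeal A⁰ K))
include hI

theorem exists_coeSubmodule_mul_eq_one_of_isUnit :
    ∃ I' : Submodule A K, coeSubmodule K I * I' = 1 := by
  obtain ⟨u, hu⟩ := hI
  refine ⟨↑(↑u⁻¹ : FractionalIdeal A⁰ K), ?_⟩
  rw [← FractionalIdeal.coe_coeIdeal (S := A⁰), ← FractionalIdeal.coe_mul, ← hu, Units.mul_inv,
    FractionalIdeal.coe_one]

variable [IsFractionRing A K]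

theorem le_of_mul_le_mul_left_of_isUnit {B C : Ideal A} (h : I * B ≤ I * C) : B ≤ C := by
  rw [← FractionalIdeal.coeIdeal_le_coeIdeal K] at h ⊢
  rw [FractionalIdeal.coeIdeal_mul, FractionalIdeal.coeIdeal_mul] at h
  obtain ⟨u, hu⟩ := hI
  have := mul_le_mul_left h (↑u⁻¹ : FractionalIdeal A⁰ K)
  simpa [← hu, mul_right_comm _ _ (↑u⁻¹ : FractionalIdeal A⁰ K)] using this

theorem mem_of_mul_mem_mul_of_mul_eq_span_singleton {J C : Ideal A} {x r : A}
    (hIC : I * C = span {x}) (hCJ : C ⊔ J = ⊤) (hr : r * x ∈ I * J) : r ∈ J := by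
  have hrC : span {r} * C ≤ J := by
    refine le_of_mul_le_mul_left_of_isUnit hI ?_
    rw [mul_left_comm, hIC, span_singleton_mul_span_singleton, span_le, Set.singleton_subset_iff]
    exact hr
  have hr' : r ∈ span {r} * (C ⊔ J) := by
    rw [hCJ, mul_top]
    exact mem_span_singleton_self r
  rw [mul_sup] at hr'
  exact sup_le hrC mul_le_right hr'

theorem card_quotient_mul_of_isUnit (J : Ideal A) :
    Nat.card (A ⧸ I) * Nat.card (A ⧸ J) = Nat.card (A ⧸ (I * J)) := by
  by_cases hJ : Finite (A ⧸ J)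
  · obtain ⟨I', hII'⟩ := exists_coeSubmodule_mul_eq_one_of_isUnit hI
    obtain ⟨x, C, hIC, hCJ⟩ := exists_mul_eq_span_singleton_sup_eq_top_of_mul_eq_one hII' J
    exact card_quotient_mul_of_eq_span_singleton_sup (eq_span_singleton_sup_mul_of_mul_eq hIC hCJ)
      fun r hr => mem_of_mul_mem_mul_of_mul_eq_span_singleton hI hIC hCJ hr
  · have : Infinite (A ⧸ J) := not_finite_iff_infinite.mp hJ
    have : Infinite (A ⧸ (I * J)) :=
      Infinite.of_surjective _ (Quotient.factor_surjective mul_le_right)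
    simp [Nat.card_eq_zero_of_infinite]

end FractionRing

end Ideal

set_option synthInstance.maxHeartbeats 1000000 in
theorem stmt3_general (K : Type*) [Field K] (R : Subring K)
    (I J : Ideal ↥R)
    (hI : IsUnit (I : FractionalIdeal (nonZeroDivisors ↥R) (FractionRing ↥R))) :
    Nat.card (↥R ⧸ I) * Nat.card (↥R ⧸ J) = Nat.card (↥R ⧸ (I * J)) :=
  Ideal.card_quotient_mul_of_isUnit hI J

set_option synthInstance.maxHeartbeats 1000000 in
/-- In a number ring `R` (a subring of a number field), if `I` is an invertible ideal and `J`
any nonzero ideal, then `N(I)·N(J) = N(IJ)`. -/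
theorem stmt3 (K : Type*) [Field K] [NumberField K] (R : Subring K)
    (I J : Ideal ↥R) (hJ : J ≠ ⊥)
    (hI : IsUnit (I : FractionalIdeal (nonZeroDivisors ↥R) (FractionRing ↥R))) :
    Nat.card (↥R ⧸ I) * Nat.card (↥R ⧸ J) = Nat.card (↥R ⧸ (I * J)) :=
  stmt3_general K R I J hI
end

section
/- Let R be a number ring and I a nonzero ideal of R, and let 𝔭 be a maximal ideal of R. Then N(𝔭I) ≥ N(I)·N(𝔭). -/
/-!
If `R ⧸ I` or `R ⧸ 𝔭` is infinite, the left-hand side is `0` (`Nat.card` of an infinite type).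
Otherwise `N(𝔭I) = N(I) · #(I/𝔭I)`, and `I/𝔭I` is a nonzero `R/𝔭`-vector space by Nakayama's
lemma, so it has at least `N(𝔭)` elements. Nakayama needs `I` finitely generated: `I` contains
`n = N(I)`, and `R/nR` is finite because, for a prime `p`, lifts of `𝔽_p`-linearly independent
elements of `R/pR` are `ℤ`-linearly independent in `K`, whence `dim_{𝔽_p} R/pR ≤ [K : ℚ]`.
-/

open Ideal

theorem pow_dvd_of_forall_dvd_of_sum_zsmul_eq_zero {M ι : Type*} [AddCommGroup M]
    [IsAddTorsionFree M] {p : ℤ} (hp : p ≠ 0) {v : ι → M} {s : Finset ι}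
    (hdvd : ∀ g : ι → ℤ, ∑ i ∈ s, g i • v i = 0 → ∀ i ∈ s, p ∣ g i) (k : ℕ) :
    ∀ g : ι → ℤ, ∑ i ∈ s, g i • v i = 0 → ∀ i ∈ s, p ^ k ∣ g i := by
  induction k with
  | zero => simp
  | succ k ih =>
    intro g hg i hi
    have hg_eq : ∀ j ∈ s, g j = p * (g j / p) := fun j hj =>
      (Int.mul_ediv_cancel' (hdvd g hg j hj)).symm
    have hg' : ∑ j ∈ s, (g j / p) • v j = 0 := by
      refine zsmul_right_injective hp ?_
      simp only [Finset.smul_sum, smul_smul, smul_zero]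
      rw [← hg]
      exact Finset.sum_congr rfl fun j hj => by rw [← hg_eq j hj]
    rw [hg_eq i hi, pow_succ']
    exact mul_dvd_mul_left p (ih _ hg' i hi)

theorem linearIndependent_int_of_forall_dvd {M ι : Type*} [AddCommGroup M]
    [IsAddTorsionFree M] {p : ℕ} (hp : 1 < p) {v : ι → M}
    (hdvd : ∀ (s : Finset ι) (g : ι → ℤ), ∑ i ∈ s, g i • v i = 0 → ∀ i ∈ s, (p : ℤ) ∣ g i) :
    LinearIndependent ℤ v := by
  rw [linearIndependent_iff']
  intro s g hg i hi
  refine Int.eq_zero_of_dvd_of_natAbs_lt_natAbs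
    (pow_dvd_of_forall_dvd_of_sum_zsmul_eq_zero (by omega) (hdvd s) (g i).natAbs g hg i hi) ?_
  simpa [Int.natAbs_pow] using Nat.lt_pow_self hp

namespace Ideal

variable {A : Type*} [CommRing A]

theorem natCast_card_quotient_mem (I : Ideal A) : (Nat.card (A ⧸ I) : A) ∈ I := by
  rw [← Ideal.Quotient.eq_zero_iff_mem, map_natCast, ← nsmul_one]
  exact card_nsmul_eq_zero'

theorem fg_of_le_of_finite_quotient {I J : Ideal A} (hJI : J ≤ I) (hJ : J.FG)
    [Finite (A ⧸ J)] : I.FG := by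
  refine Submodule.fg_of_fg_map_of_fg_inf_ker J.mkQ (IsNoetherian.noetherian _) ?_
  rwa [Submodule.ker_mkQ, inf_eq_right.mpr hJI]

theorem not_le_mul_of_fg [IsDomain A] {𝔭 I : Ideal A} (h𝔭 : 𝔭 ≠ ⊤) (hI : I.FG) (hI0 : I ≠ ⊥) :
    ¬ I ≤ 𝔭 * I := by
  intro hle
  obtain ⟨r, hr𝔭, hr⟩ := Submodule.exists_mem_and_smul_eq_self_of_fg_of_le_smul 𝔭 I hI hle
  obtain ⟨x, hxI, hx0⟩ := Submodule.exists_mem_ne_zero_of_ne_bot hI0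
  have hr1 : r = 1 := mul_right_cancel₀ hx0 ((hr x hxI).trans (one_mul x).symm)
  exact h𝔭 ((eq_top_iff_one 𝔭).mpr (hr1 ▸ hr𝔭))

theorem card_quotient_le_card_map_mkQ {𝔭 I : Ideal A} (h𝔭 : 𝔭.IsMaximal) (hI𝔭 : ¬ I ≤ 𝔭 * I)
    [Finite (A ⧸ 𝔭 * I)] : Nat.card (A ⧸ 𝔭) ≤ Nat.card (Submodule.map (𝔭 * I).mkQ I) := by
  obtain ⟨a, haI, ha⟩ := SetLike.not_le_iff_exists.mp hI𝔭
  let f : A →ₗ[A] A ⧸ 𝔭 * I := (𝔭 * I).mkQ ∘ₗ LinearMap.mulRight A a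
  have hker : LinearMap.ker f = 𝔭 := by
    refine (h𝔭.eq_of_le (fun htop => ha ?_) fun r hr => ?_).symm
    · have : f 1 = 0 := LinearMap.mem_ker.mp (htop ▸ Submodule.mem_top)
      simpa only [f, LinearMap.comp_apply, LinearMap.mulRight_apply, one_mul, Submodule.mkQ_apply,
        Submodule.Quotient.mk_eq_zero] using this
    · simpa only [f, LinearMap.mem_ker, LinearMap.comp_apply, LinearMap.mulRight_apply,
        Submodule.mkQ_apply, Submodule.Quotient.mk_eq_zero] using mul_mem_mul hr haI
  have hrange : LinearMap.range f ≤ Submodule.map (𝔭 * I).mkQ I := by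
    rintro _ ⟨r, rfl⟩
    exact ⟨r * a, I.mul_mem_left r haI, rfl⟩
  calc Nat.card (A ⧸ 𝔭)
      = Nat.card (LinearMap.range f) :=
        Nat.card_congr ((Submodule.quotEquivOfEq _ _ hker.symm).trans f.quotKerEquivRange).toEquiv
    _ ≤ Nat.card (Submodule.map (𝔭 * I).mkQ I) := Nat.card_mono (Set.toFinite _) hrange

theorem card_quotient_mul_card_quotient_le {𝔭 I : Ideal A} (h𝔭 : 𝔭.IsMaximal) (hI : I.FG)
    (hI𝔭 : ¬ I ≤ 𝔭 * I) [Finite (A ⧸ I)] [Finite (A ⧸ 𝔭)] :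
    Nat.card (A ⧸ I) * Nat.card (A ⧸ 𝔭) ≤ Nat.card (A ⧸ 𝔭 * I) := by
  have : Finite (A ⧸ 𝔭 * I) := Submodule.finite_quotient_smul 𝔭 hI
  rw [← Submodule.card_quotient_mul_card_quotient I (𝔭 * I) Ideal.mul_le_right, mul_comm]
  exact Nat.mul_le_mul_right _ (card_quotient_le_card_map_mkQ h𝔭 hI𝔭)

end Ideal

namespace NumberField

variable {K : Type*} [Field K] [NumberField K] (R : Subring K)

theorem finite_quotient_span_prime {p : ℕ} (hp : p.Prime) : Finite (R ⧸ span {(p : R)}) := by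
  by_cases hunit : IsUnit (p : R)
  · rw [span_singleton_eq_top.mpr hunit]
    infer_instance
  have : Fact p.Prime := ⟨hp⟩
  have := CharP.quotient R p hunit
  let _ : Algebra (ZMod p) (R ⧸ span {(p : R)}) := ZMod.algebra _ p
  let b := Module.Basis.ofVectorSpace (ZMod p) (R ⧸ span {(p : R)})
  let lift : (R ⧸ span {(p : R)}) → R := Function.surjInv Ideal.Quotient.mk_surjective
  have hlift : LinearIndependent ℤ fun i => ((lift (b i) : R) : K) := by
    refine linearIndependent_int_of_forall_dvd hp.one_lt fun s g hg i hi => ?_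
    rw [← ZMod.intCast_zmod_eq_zero_iff_dvd]
    refine linearIndependent_iff'.mp b.linearIndependent s (fun j => (g j : ZMod p)) ?_ i hi
    have hgR : ∑ j ∈ s, g j • lift (b j) = 0 := by exact_mod_cast hg
    simpa [map_sum, map_zsmul, Int.cast_smul_eq_zsmul, lift,
      Function.surjInv_eq Ideal.Quotient.mk_surjective] using
      congrArg (Ideal.Quotient.mk (span {(p : R)})) hgR
  have : Finite _ := ((LinearIndependent.iff_fractionRing ℤ ℚ).mp hlift).finite
  have := Module.Finite.of_basis b
  exact Module.finite_of_finite (ZMod p)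

theorem finite_quotient_span_natCast {n : ℕ} (hn : n ≠ 0) : Finite (R ⧸ span {(n : R)}) := by
  induction n using Nat.recOnMul with
  | zero => exact absurd rfl hn
  | one => simp only [Nat.cast_one, span_singleton_one]; infer_instance
  | prime p hp => exact finite_quotient_span_prime R hp
  | mul a b iha ihb =>
    have := iha (left_ne_zero_of_mul hn)
    have := ihb (right_ne_zero_of_mul hn)
    rw [Nat.cast_mul, ← span_singleton_mul_span_singleton]
    exact Submodule.finite_quotient_smul _ (Submodule.fg_span_singleton _)

theorem fg_of_finite_quotient (I : Ideal R) [Finite (R ⧸ I)] : I.FG := by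
  have := finite_quotient_span_natCast R (Nat.card_pos (α := R ⧸ I)).ne'
  have hnI : span {(Nat.card (R ⧸ I) : R)} ≤ I :=
    (span_singleton_le_iff_mem I).mpr (natCast_card_quotient_mem I)
  exact fg_of_le_of_finite_quotient hnI (Submodule.fg_span_singleton _)

end NumberField

/-- In a number ring `R`, for any nonzero ideal `I` and maximal ideal `𝔭`,
`N(𝔭I) ≥ N(I)·N(𝔭)`. -/
theorem stmt4 (K : Type*) [Field K] [NumberField K] (R : Subring K)
    (I : Ideal ↥R) (hI : I ≠ ⊥) (𝔭 : Ideal ↥R) (h𝔭 : 𝔭.IsMaximal) :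
    Nat.card (↥R ⧸ I) * Nat.card (↥R ⧸ 𝔭) ≤ Nat.card (↥R ⧸ (𝔭 * I)) := by
  by_cases hfin : Finite (R ⧸ I) ∧ Finite (R ⧸ 𝔭)
  · obtain ⟨_, _⟩ := hfin
    have hI_fg := NumberField.fg_of_finite_quotient R I
    exact card_quotient_mul_card_quotient_le h𝔭 hI_fg (not_le_mul_of_fg h𝔭.ne_top hI_fg hI)
  · rw [not_and_or, not_finite_iff_infinite, not_finite_iff_infinite] at hfin
    rcases hfin with _ | _ <;> simp [Nat.card_eq_zero_of_infinite]
end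

section
/- Let R be a number ring such that N(𝔭²) ≤ N(𝔭)² for every maximal ideal 𝔭 of R. Then R is a Dedekind domain. -/
/-!
Let `J` be a nonzero ideal of `R`. It contains a nonzero integer, so `R ⧸ J` is a module over the
finite ring `ℤ ⧸ (J ∩ ℤ)`. A finitely generated subgroup of `R` is free of rank at most `[K : ℚ]`,
so every finite subset of `R ⧸ J` lies in a span of at most `[K : ℚ]` elements, and therefore
`R ⧸ J` is finite. Hence `R` is Noetherian of dimension one.

For a maximal ideal `𝔭`, `N(𝔭²) = N(𝔭) ^ (1 + dim 𝔭/𝔭²)`, so the hypothesis says that `𝔭/𝔭²` has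
dimension at most one over `R/𝔭`. By Nakayama the maximal ideal of `R_𝔭` is then principal, so
`R_𝔭` is a discrete valuation ring.
-/

open Module Submodule IsLocalRing

section FiniteRing

variable {S Q : Type*} [Semiring S] [Finite S] [AddCommMonoid Q] [Module S Q]

theorem Finset.card_le_of_coe_subset_span {s t : Finset Q}
    (h : (t : Set Q) ⊆ span S (s : Set Q)) : t.card ≤ Nat.card S ^ s.card := by
  let f := Fintype.linearCombination S ((↑) : s → Q)
  have hrange : (span S (s : Set Q) : Set Q) = Set.range f := by
    rw [← LinearMap.coe_range, Fintype.range_linearCombination, Subtype.range_coe]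
  rw [hrange] at h
  calc t.card = Nat.card (t : Set Q) := by simp
    _ ≤ Nat.card (Set.range f) := Nat.card_mono (Set.finite_range _) h
    _ ≤ Nat.card (s → S) := Finite.card_range_le _
    _ = Nat.card S ^ s.card := by
      rw [Nat.card_fun, Nat.card_eq_fintype_card (α := s), Fintype.card_coe]

theorem Module.finite_of_forall_subset_span_card_le (n : ℕ)
    (h : ∀ t : Finset Q, ∃ s : Finset Q, s.card ≤ n ∧ (t : Set Q) ⊆ span S (s : Set Q)) :
    Finite Q := by
  by_contra hQ
  have : Infinite Q := not_finite_iff_infinite.mp hQ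
  obtain ⟨t, ht⟩ := Infinite.exists_subset_card_eq Q (Nat.card S ^ n + 1)
  obtain ⟨s, hs, hts⟩ := h t
  have := Finset.card_le_of_coe_subset_span hts
  have := Nat.pow_le_pow_right (Nat.card_pos (α := S)) hs
  omega

end FiniteRing

theorem Submodule.FG.exists_finset_card_le_span_eq {R M : Type*} [CommRing R] [IsDomain R]
    [IsPrincipalIdealRing R] [AddCommGroup M] [Module R M] [Module.IsTorsionFree R M] {n : ℕ}
    (hM : Module.rank R M ≤ n) {N : Submodule R M} (hN : N.FG) :
    ∃ s : Finset M, s.card ≤ n ∧ span R s = N := by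
  have : Module.Finite R N := Module.Finite.iff_fg.mpr hN
  obtain ⟨s, hs, hsN⟩ := hN.exists_span_finset_card_eq_spanFinrank
  refine ⟨s, ?_, hsN⟩
  rw [hs, ← spanFinrank_top, ← Module.finrank_eq_spanFinrank_of_free]
  exact finrank_le_of_rank_le ((Submodule.rank_le _).trans hM)

section FiniteQuotients

variable {A : Type*} [CommRing A]

theorem isNoetherianRing_of_finite_quotient (h : ∀ I : Ideal A, I ≠ ⊥ → Finite (A ⧸ I)) :
    IsNoetherianRing A := by
  refine isNoetherianRing_iff.mpr ⟨fun I => ?_⟩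
  by_cases hI : I = ⊥
  · exact hI ▸ fg_bot
  obtain ⟨x, hxI, hx⟩ := Submodule.exists_mem_ne_zero_of_ne_bot hI
  have := h (Ideal.span {x}) (by simpa using hx)
  have hle : Ideal.span {x} ≤ I := (Ideal.span_singleton_le_iff_mem I).mpr hxI
  refine fg_of_fg_map_of_fg_inf_ker (Ideal.span {x}).mkQ (IsNoetherian.noetherian _) ?_
  rw [ker_mkQ, inf_eq_right.mpr hle]
  exact ⟨{x}, by simp⟩

theorem Ring.DimensionLEOne.of_finite_quotient (h : ∀ I : Ideal A, I ≠ ⊥ → Finite (A ⧸ I)) :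
    Ring.DimensionLEOne A :=
  ⟨fun {P} hP _ => have := h P hP; Ideal.Quotient.maximal_of_isField _ (Finite.isField_of_domain _)⟩

end FiniteQuotients

namespace NumberField

variable {K : Type*} [Field K] [NumberField K] (R : Subring K)

theorem rank_int_subring_le : Module.rank ℤ R ≤ finrank ℚ K :=
  calc Module.rank ℤ R ≤ Module.rank ℤ K :=
        LinearMap.rank_le_of_injective (algebraMap R K).toIntAlgHom.toLinearMap
          Subtype.val_injective
    _ = finrank ℚ K := by rw [← IsFractionRing.rank_right_eq ℤ ℚ K, Module.finrank_eq_rank]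

theorem isAlgebraic_int_subring (x : R) : IsAlgebraic ℤ x :=
  (isAlgebraic_algebraMap_iff (A := K) Subtype.val_injective).mp
    ((IsFractionRing.isAlgebraic_iff ℤ ℚ K).mpr (Algebra.IsAlgebraic.isAlgebraic _))

theorem finite_quotient_subring {J : Ideal R} (hJ : J ≠ ⊥) : Finite (R ⧸ J) := by
  classical
  obtain ⟨x, hxJ, hx⟩ := Submodule.exists_mem_ne_zero_of_ne_bot hJ
  let S := ℤ ⧸ J.comap (algebraMap ℤ R)
  have : Finite S := Ideal.finiteQuotientOfFreeOfNeBot _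
    (Ideal.comap_ne_bot_of_algebraic_mem hx hxJ (isAlgebraic_int_subring R x))
  refine Module.finite_of_forall_subset_span_card_le (S := S) (finrank ℚ K) fun t => ?_
  let π := (Ideal.Quotient.mkₐ ℤ J).toLinearMap
  obtain ⟨t', -, rfl⟩ := (Finset.subset_set_image_iff (t := t) (s := Set.univ) (f := π)).mp
    (by rw [Set.image_univ]; exact fun q _ => Ideal.Quotient.mk_surjective q)
  obtain ⟨s, hs, hspan⟩ :=
    (fg_span t'.finite_toSet).exists_finset_card_le_span_eq (rank_int_subring_le R)
  refine ⟨s.image π, Finset.card_image_le.trans hs, ?_⟩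
  calc ((t'.image π : Finset _) : Set (R ⧸ J)) ⊆ π '' (span ℤ (t' : Set R) : Set R) := by
        rw [Finset.coe_image]; exact Set.image_mono subset_span
    _ = (span ℤ (π '' (s : Set R)) : Set (R ⧸ J)) := by
        rw [← hspan, ← Submodule.map_coe, Submodule.map_span]
    _ ⊆ span S (s.image π : Set (R ⧸ J)) := by
        rw [Finset.coe_image]; exact span_le_restrictScalars ℤ _ _

end NumberField

namespace Ideal

variable {A : Type*} [CommRing A] (P : Ideal A) [Finite (A ⧸ P ^ 2)]

instance finite_cotangent : Finite P.Cotangent :=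
  .of_equiv _ P.cotangentEquivIdeal.toEquiv.symm

variable [P.IsMaximal]

theorem natCard_quotient_sq :
    Nat.card (A ⧸ P ^ 2) = Nat.card (A ⧸ P) ^ (1 + finrank (A ⧸ P) P.Cotangent) := by
  let := Quotient.field P
  rw [card_eq_card_quotient_mul_card P.cotangentIdeal, Nat.card_congr P.quotCotangent.toEquiv,
    ← Nat.card_congr P.cotangentEquivIdeal.toEquiv, Module.natCard_eq_pow_finrank (K := A ⧸ P),
    pow_add, pow_one, mul_comm]

theorem finrank_cotangent_le_one_of_natCard_le
    (h : Nat.card (A ⧸ P ^ 2) ≤ Nat.card (A ⧸ P) ^ 2) : finrank (A ⧸ P) P.Cotangent ≤ 1 := by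
  have : Finite (A ⧸ P) := .of_surjective _ (Quotient.factor_surjective (pow_le_self two_ne_zero))
  have : Nontrivial (A ⧸ P) := Quotient.nontrivial_iff.mpr (IsMaximal.ne_top ‹_›)
  rw [natCard_quotient_sq, Nat.pow_le_pow_iff_right Finite.one_lt_card] at h
  omega

theorem exists_le_sq_sup_span_of_natCard_le
    (h : Nat.card (A ⧸ P ^ 2) ≤ Nat.card (A ⧸ P) ^ 2) : ∃ x ∈ P, P ≤ P ^ 2 ⊔ span {x} := by
  let := Quotient.field P
  obtain ⟨v, hv⟩ := finrank_le_one_iff.mp (finrank_cotangent_le_one_of_natCard_le P h)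
  obtain ⟨x, rfl⟩ := P.toCotangent_surjective v
  refine ⟨x, x.2, fun y hy => ?_⟩
  obtain ⟨c, hc⟩ := hv (P.toCotangent ⟨y, hy⟩)
  obtain ⟨a, rfl⟩ := Quotient.mk_surjective c
  change a • P.toCotangent x = _ at hc
  rw [← map_smul, eq_comm, toCotangent_eq] at hc
  rw [← sub_add_cancel y (a * x)]
  exact add_mem_sup hc (mem_span_singleton'.mpr ⟨a, rfl⟩)

end Ideal

theorem IsLocalRing.maximalIdeal_eq_span_of_le_sq_sup_span {R : Type*} [CommRing R]
    [IsLocalRing R] [IsNoetherianRing R] {x : R} (hx : x ∈ maximalIdeal R)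
    (h : maximalIdeal R ≤ maximalIdeal R ^ 2 ⊔ Ideal.span {x}) :
    maximalIdeal R = Ideal.span {x} := by
  refine le_antisymm ?_ ((Ideal.span_singleton_le_iff_mem _).mpr hx)
  refine le_of_le_smul_of_le_jacobson_bot (IsNoetherian.noetherian _)
    (jacobson_eq_maximalIdeal ⊥ bot_ne_top).ge ?_
  rwa [sup_comm, smul_eq_mul, ← sq]

theorem isDiscreteValuationRing_localization_of_le_sq_sup_span {A : Type*} [CommRing A]
    [IsDomain A] [IsNoetherianRing A] {P : Ideal A} [P.IsPrime] (hP : P ≠ ⊥) {x : A}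
    (hx : x ∈ P) (h : P ≤ P ^ 2 ⊔ Ideal.span {x}) :
    IsDiscreteValuationRing (Localization.AtPrime P) := by
  have hmax := Localization.AtPrime.map_eq_maximalIdeal (I := P)
  have hprincipal : (maximalIdeal (Localization.AtPrime P)).IsPrincipal := by
    refine ⟨⟨algebraMap A _ x, maximalIdeal_eq_span_of_le_sq_sup_span ?_ ?_⟩⟩
    · exact hmax ▸ Ideal.mem_map_of_mem _ hx
    · rw [← hmax]
      simpa only [Ideal.map_sup, Ideal.map_pow, Ideal.map_span, Set.image_singleton] using
        Ideal.map_mono (f := algebraMap A (Localization.AtPrime P)) h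
  exact ((IsDiscreteValuationRing.TFAE _ (IsLocalization.AtPrime.not_isField A hP _)).out 0 4).mpr
    hprincipal

theorem stmt5_general (K : Type*) [Field K] [NumberField K] (R : Subring K)
    (h : ∀ 𝔭 : Ideal ↥R, 𝔭.IsMaximal →
      Nat.card (↥R ⧸ 𝔭 ^ 2) ≤ (Nat.card (↥R ⧸ 𝔭)) ^ 2) :
    IsDedekindDomain ↥R := by
  have hfin (J : Ideal R) (hJ : J ≠ ⊥) : Finite (R ⧸ J) := NumberField.finite_quotient_subring R hJ
  have := isNoetherianRing_of_finite_quotient hfin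
  have := Ring.DimensionLEOne.of_finite_quotient hfin
  have : IsDedekindDomainDvr R := by
    refine ⟨fun P hP hPp => ?_⟩
    have hPm := hPp.isMaximal hP
    have := hfin (P ^ 2) (pow_ne_zero 2 hP)
    obtain ⟨x, hx, hPx⟩ := P.exists_le_sq_sup_span_of_natCard_le (h P hPm)
    exact isDiscreteValuationRing_localization_of_le_sq_sup_span hP hx hPx
  infer_instance

/-- A number ring (not a field) in which `N(𝔭²) ≤ N(𝔭)²` for every maximal ideal `𝔭`
is a Dedekind domain. -/
theorem stmt5 (K : Type*) [Field K] [NumberField K] (R : Subring K)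
    (hnf : ¬ IsField ↥R)
    (h : ∀ 𝔭 : Ideal ↥R, 𝔭.IsMaximal →
      Nat.card (↥R ⧸ 𝔭 ^ 2) ≤ (Nat.card (↥R ⧸ 𝔭)) ^ 2) :
    IsDedekindDomain ↥R :=
  stmt5_general K R h
end

section
/- Let R be an order in a quadratic number field K, and let I be a nonzero ideal of R. Then I is an invertible ideal of its multiplier ring R_I = {x ∈ K : xI ⊆ I}. -/
/-!
Let `α, β` be a `ℤ`-basis of `I` and `a τ² + b τ + c = 0` a relation for `τ = β / α` with
`gcd(a, b, c) = 1`. Then `a τ` multiplies `ℤα + ℤβ` into itself, so it lies in `S`, and the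
products of `α, β` with `a / α, (b + a τ) / α` are `a, b + a τ, a τ, -c`: all lie in `S`, and
together they generate `S` because `a, b, c` generate the unit ideal of `ℤ`. Hence
`S⟨a / α, (b + a τ) / α⟩` is the inverse of `S⟨α, β⟩ = S I`.
-/

section

open Polynomial Module Submodule

theorem natDegree_integerNormalization_le {R S : Type*} [CommRing R] (M : Submonoid R) [CommRing S]
    [Algebra R S] [IsLocalization M S] (p : S[X]) :
    (IsLocalization.integerNormalization M p).natDegree ≤ p.natDegree :=
  natDegree_le_iff_coeff_eq_zero.2 fun _ hN => notMem_support_iff.1 fun h =>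
    (le_natDegree_of_mem_supp _ (IsLocalization.integerNormalization_support M p h)).not_gt hN

theorem exists_coprime_quadratic_relation {K : Type*} [Field K] [CharZero K]
    [FiniteDimensional ℚ K] (hK : finrank ℚ K ≤ 2) (τ : K) :
    ∃ a b c : ℤ, Ideal.span {a, b, c} = ⊤ ∧ a * τ ^ 2 + b * τ + c = 0 := by
  have hf : minpoly ℚ τ ≠ 0 := minpoly.ne_zero (Algebra.IsIntegral.isIntegral τ)
  set q := IsLocalization.integerNormalization (nonZeroDivisors ℤ) (minpoly ℚ τ)
  have hq : q ≠ 0 := IsFractionRing.integerNormalization_eq_zero_iff.not.2 hf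
  set p := q.primPart
  have hp : aeval τ p = 0 := aeval_primPart_eq_zero hq
    (IsLocalization.integerNormalization_aeval_eq_zero _ _ (minpoly.aeval ℚ τ))
  have hdeg : p.natDegree < 3 := by
    rw [natDegree_primPart]
    linarith [natDegree_integerNormalization_le (nonZeroDivisors ℤ) (minpoly ℚ τ),
      minpoly.natDegree_le (A := ℚ) τ]
  refine ⟨p.coeff 2, p.coeff 1, p.coeff 0, ?_, ?_⟩
  · rw [eq_top_iff, ← (isPrimitive_iff_contentIdeal_eq_top p).1 (isPrimitive_primPart q),
      contentIdeal_def, Ideal.span_le]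
    intro x hx
    obtain ⟨n, hn, rfl⟩ := mem_coeffs_iff.1 hx
    have : n < 3 := (le_natDegree_of_mem_supp n hn).trans_lt hdeg
    interval_cases n <;> exact Ideal.subset_span (by simp)
  · rw [aeval_eq_sum_range' hdeg] at hp
    simp only [Finset.sum_range_succ, Finset.sum_range_zero, zsmul_eq_mul] at hp
    linear_combination hp

theorem one_mem_of_intCast_mem {A : Type*} [AddGroupWithOne A] (P : AddSubgroup A) {s : Set ℤ}
    (hs : Ideal.span s = ⊤) (h : ∀ n ∈ s, (n : A) ∈ P) : (1 : A) ∈ P := by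
  have hle : Ideal.span s ≤ (P.comap (Int.castAddHom A)).toIntSubmodule := Ideal.span_le.2 h
  simpa using AddSubgroup.mem_comap.1 (hle (hs ▸ Submodule.mem_top : (1 : ℤ) ∈ Ideal.span s))

variable {K : Type*} [Field K] (S : Subring K)

theorem isFractional_span_of_mul_mem {s : Set K} {d : K} (hd : d ∈ S) (hd0 : d ≠ 0)
    (h : ∀ z ∈ s, d * z ∈ S) : IsFractional (nonZeroDivisors S) (span S s) :=
  FractionalIdeal.isFractional_span_iff.2
    ⟨⟨d, hd⟩, mem_nonZeroDivisors_of_ne_zero (by simpa using hd0),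
      fun z hz => ⟨⟨_, h z hz⟩, rfl⟩⟩

variable {S}

theorem span_pair_mul_span_pair_eq_one {α β x y θ : K} {a b c : ℤ} (hθ : θ ∈ S)
    (habc : Ideal.span {a, b, c} = ⊤) (hαx : α * x = a) (hβx : β * x = θ)
    (hαy : α * y = b + θ) (hβy : β * y = -c) :
    span S {α, β} * span S {x, y} = 1 := by
  have hZ (n : ℤ) : (n : K) ∈ S := intCast_mem S n
  have hmem {p q : K} (hp : p ∈ ({α, β} : Set K)) (hq : q ∈ ({x, y} : Set K)) :
      p * q ∈ span S {α, β} * span S {x, y} :=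
    mul_mem_mul (subset_span hp) (subset_span hq)
  apply le_antisymm
  · have hS1 {z : K} (hz : z ∈ S) : z ∈ (1 : Submodule S K) := mem_one.2 ⟨⟨z, hz⟩, rfl⟩
    rw [span_mul_span, span_le]
    rintro _ ⟨p, hp, q, hq, rfl⟩
    simp only [Set.mem_insert_iff, Set.mem_singleton_iff] at hp hq
    refine hS1 ?_
    dsimp only
    rcases hp with rfl | rfl <;> rcases hq with rfl | rfl
    · exact hαx ▸ hZ a
    · exact hαy ▸ add_mem (hZ b) hθ
    · exact hβx ▸ hθ
    · exact hβy ▸ neg_mem (hZ c)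
  · rw [Submodule.one_le]
    refine one_mem_of_intCast_mem (span S {α, β} * span S {x, y}).toAddSubgroup habc ?_
    rintro n (rfl | rfl | rfl)
    · exact hαx ▸ hmem (by simp) (by simp)
    · have := sub_mem (hmem (p := α) (q := y) (by simp) (by simp))
        (hmem (p := β) (q := x) (by simp) (by simp))
      rwa [hαy, hβx, add_sub_cancel_right] at this
    · have := neg_mem (hmem (p := β) (q := y) (by simp) (by simp))
      rwa [hβy, neg_neg] at this

theorem exists_isUnit_span_pair {α β : K} (hα : α ≠ 0) (hαS : α ∈ S) (hβS : β ∈ S)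
    (hS : ∀ x, x * α ∈ span ℤ {α, β} → x * β ∈ span ℤ {α, β} → x ∈ S)
    {a b c : ℤ} (habc : Ideal.span {a, b, c} = ⊤)
    (hrel : a * (β / α) ^ 2 + b * (β / α) + c = 0) :
    ∃ J : FractionalIdeal (nonZeroDivisors S) K,
      (J : Submodule S K) = span S {α, β} ∧ IsUnit J := by
  have hrel' : a * β ^ 2 + b * α * β + c * α ^ 2 = 0 := by
    field_simp at hrel; linear_combination hrel
  set θ := a * β / α
  have hθ : θ ∈ S := hS θ
    (mem_span_pair.2 ⟨0, a, by simp only [θ, zero_smul, zero_add, zsmul_eq_mul]; field_simp⟩)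
    (mem_span_pair.2 ⟨-c, -b, by
      simp only [θ, zsmul_eq_mul, Int.cast_neg]; field_simp; linear_combination -hrel'⟩)
  set x := a / α
  set y := (b + θ) / α
  have hαx : α * x = a := by simp only [x]; field_simp
  have hβx : β * x = θ := by simp only [x, θ]; field_simp
  have hαy : α * y = b + θ := by simp only [y]; field_simp
  have hβy : β * y = -c := by simp only [y, θ]; field_simp; linear_combination hrel'
  let J : FractionalIdeal (nonZeroDivisors S) K :=
    ⟨span S {α, β},
      isFractional_span_of_mul_mem S S.one_mem one_ne_zero (by simp [hαS, hβS])⟩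
  let J' : FractionalIdeal (nonZeroDivisors S) K :=
    ⟨span S {x, y}, isFractional_span_of_mul_mem S hαS hα
      (by simp [hαx, hαy, hθ, add_mem, intCast_mem])⟩
  refine ⟨J, rfl, IsUnit.of_mul_eq_one J' ?_⟩
  rw [← FractionalIdeal.coeToSubmodule_inj, FractionalIdeal.coe_mul, FractionalIdeal.coe_one]
  exact span_pair_mul_span_pair_eq_one hθ habc hαx hβx hαy hβy

theorem image_coe_eq_span_pair {R : Subring K} {I : Ideal R} (e : Basis (Fin 2) ℤ I) :
    ((↑) '' (I : Set R) : Set K) = span ℤ {((e 0 : R) : K), ((e 1 : R) : K)} := by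
  ext z
  simp only [Set.mem_image, SetLike.mem_coe, mem_span_pair]
  constructor
  · rintro ⟨i, hi, rfl⟩
    refine ⟨e.repr ⟨i, hi⟩ 0, e.repr ⟨i, hi⟩ 1, ?_⟩
    have h := congrArg (fun j : I => ((j : R) : K)) (e.sum_repr ⟨i, hi⟩)
    rw [Fin.sum_univ_two] at h
    simpa using h
  · rintro ⟨m, n, rfl⟩
    exact ⟨(m • e 0 + n • e 1 : I), (m • e 0 + n • e 1 : I).2, by simp⟩

theorem mul_mem_span_pair {α β x m : K} (hα : x * α ∈ span ℤ {α, β})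
    (hβ : x * β ∈ span ℤ {α, β}) (hm : m ∈ span ℤ {α, β}) :
    x * m ∈ span ℤ {α, β} := by
  obtain ⟨p, q, rfl⟩ := mem_span_pair.1 hm
  rw [mul_add, mul_smul_comm, mul_smul_comm]
  exact add_mem (smul_mem _ _ hα) (smul_mem _ _ hβ)

end

set_option synthInstance.maxHeartbeats 1000000 in
/-- Let `R` be an order in a quadratic number field `K` and `I` a nonzero ideal of `R`.
Then `I` is an invertible (fractional) ideal of its multiplier ring
`S = {x ∈ K : xI ⊆ I}`. -/
theorem stmt7 (K : Type*) [Field K] [NumberField K] (h2 : Module.finrank ℚ K = 2)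
    (R : Subring K) (hfree : Module.Free ℤ ↥R) (hrank : Module.finrank ℤ ↥R = 2)
    (I : Ideal ↥R) (hI : I ≠ ⊥)
    (S : Subring K)
    (hS : ∀ x : K, x ∈ S ↔ ∀ i ∈ I, ∃ j ∈ I, x * (i : K) = (j : K)) :
    ∃ J : FractionalIdeal (nonZeroDivisors ↥S) K,
      (J : Submodule ↥S K) = Submodule.span ↥S ((↑) '' (I : Set ↥R)) ∧ IsUnit J := by
  have : Module.Finite ℤ R := Module.finite_of_finrank_eq_succ hrank
  have : FiniteDimensional ℚ K := FiniteDimensional.of_finrank_eq_succ h2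
  let e := Ideal.selfBasis (Module.finBasisOfFinrankEq ℤ R hrank) I hI
  have hI_eq := image_coe_eq_span_pair e
  set α : K := ((e 0 : R) : K)
  set β : K := ((e 1 : R) : K)
  have hα : α ≠ 0 := by simpa [α] using e.ne_zero 0
  have hRS (r : R) : (r : K) ∈ S := (hS r).2 fun i hi => ⟨r * i, I.mul_mem_left r hi, rfl⟩
  have hmul (x : K) (hxα : x * α ∈ Submodule.span ℤ {α, β})
      (hxβ : x * β ∈ Submodule.span ℤ {α, β}) : x ∈ S := by
    refine (hS x).2 fun i hi => ?_
    have hiM : (i : K) ∈ Submodule.span ℤ {α, β} := by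
      rw [← SetLike.mem_coe, ← hI_eq]; exact ⟨i, hi, rfl⟩
    obtain ⟨j, hj, hji⟩ : x * i ∈ (↑) '' (I : Set R) := by
      rw [hI_eq]; exact mul_mem_span_pair hxα hxβ hiM
    exact ⟨j, hj, hji.symm⟩
  obtain ⟨a, b, c, habc, hrel⟩ := exists_coprime_quadratic_relation h2.le (β / α)
  obtain ⟨J, hJ, hunit⟩ := exists_isUnit_span_pair hα (hRS _) (hRS _) hmul habc hrel
  exact ⟨J, by rw [hJ, hI_eq, Submodule.span_span_of_tower], hunit⟩
end

section
/- Let α be an algebraic integer of degree n over ℚ, p a prime, and R = ℤ + pℤ[α]. Then 𝔪 = pℤ[α] is a maximal ideal of R and dim_{𝔽_p}(𝔪/𝔪²) = n. -/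
/-!
Since `ℤ[α]` is integral over `ℤ` and `ℤ` is integrally closed, `ℤ ∩ pℤ[α] = pℤ`, so `ℤ → R/𝔪`
induces `R/𝔪 ≅ 𝔽_p`. The map `w ↦ p w mod 𝔪²` from `ℤ[α]` onto `𝔪/𝔪²` has kernel `pℤ[α]`
because `𝔪² = p²ℤ[α]`; hence `𝔪/𝔪² ≅ ℤ[α]/pℤ[α]` has `p ^ n` elements, `ℤ[α]` being free of
rank `n`, and a vector space with `p ^ n` elements over a field with `p` elements has dimension `n`.
-/

open Polynomial Pointwise Module

theorem dvd_of_intCast_eq_mul_of_isIntegral {K : Type*} [Field K] [CharZero K] {d m : ℤ}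
    {w : K} (hw : IsIntegral ℤ w) (h : (m : K) = d * w) : d ∣ m := by
  rcases eq_or_ne d 0 with rfl | hd
  · simp_all
  have hq : algebraMap ℚ K (m / d) = w := by
    rw [map_div₀, map_intCast, map_intCast, h]
    field_simp
  obtain ⟨k, hk⟩ : ∃ k : ℤ, algebraMap ℤ ℚ k = m / d :=
    IsIntegrallyClosed.isIntegral_iff.mp <| by
      rwa [← isIntegral_algebraMap_iff (algebraMap ℚ K).injective, hq]
  refine ⟨k, ?_⟩
  rw [algebraMap_int_eq, eq_intCast, eq_div_iff (by exact_mod_cast hd)] at hk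
  exact_mod_cast hk.symm.trans (mul_comm _ _)

theorem Submodule.natCard_quotient_smul_top {M : Type*} [AddCommGroup M] [Module.Free ℤ M]
    [Module.Finite ℤ M] {d : ℤ} (hd : d ≠ 0) :
    Nat.card (M ⧸ d • (⊤ : Submodule ℤ M)) = d.natAbs ^ finrank ℤ M := by
  let f : M →+ (d • ⊤ : Submodule ℤ M) :=
    { toFun x := ⟨d • x, smul_mem_pointwise_smul _ _ _ trivial⟩
      map_zero' := by simp
      map_add' x y := by ext; simp }
  let e : M ≃+ (d • ⊤ : Submodule ℤ M) := AddEquiv.ofBijective f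
    ⟨fun x y hxy => smul_right_injective M hd (congrArg Subtype.val hxy), by
      rintro ⟨_, x, -, rfl⟩
      exact ⟨x, rfl⟩⟩
  have he : (d • ⊤ : Submodule ℤ M).subtype ∘ₗ (e : M →+ _).toIntLinearMap =
      d • LinearMap.id := rfl
  rw [← Submodule.natAbs_det_equiv _ e, he, LinearMap.det_smul, LinearMap.det_id, mul_one,
    Int.natAbs_pow]

theorem Module.finrank_eq_of_natCard_eq_pow {K V : Type*} [DivisionRing K] [Finite K]
    [AddCommGroup V] [Module K V] [Finite V] {d : ℕ} (hV : Nat.card V = Nat.card K ^ d) :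
    finrank K V = d :=
  Nat.pow_right_injective Finite.one_lt_card <| (Module.natCard_eq_pow_finrank).symm.trans hV

theorem minpoly.eq_of_irreducible_of_monic_of_isIntegrallyClosed {R S : Type*} [CommRing R]
    [IsDomain R] [IsIntegrallyClosed R] [CommRing S] [IsDomain S] [Algebra R S]
    [IsTorsionFree R S] {s : S} {f : R[X]} (hirr : Irreducible f) (hroot : Polynomial.aeval s f = 0)
    (hmonic : f.Monic) : f = minpoly R s := by
  have hs : IsIntegral R s := ⟨f, hmonic, hroot⟩
  obtain ⟨q, hq⟩ := minpoly.isIntegrallyClosed_dvd hs hroot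
  have hq_unit : IsUnit q := (hirr.isUnit_or_isUnit hq).resolve_left (minpoly.not_isUnit R s)
  exact eq_of_monic_of_associated hmonic (minpoly.monic hs)
    (hq ▸ associated_mul_unit_left _ _ hq_unit)

noncomputable def Subring.closureSingletonBasis {A : Type*} [CommRing A] [IsDomain A]
    [IsTorsionFree ℤ A] {α : A} (hα : IsIntegral ℤ α) :
    Basis (Fin (Algebra.adjoin.powerBasis' hα).dim) ℤ (Subring.closure {α}) :=
  (Algebra.adjoin.powerBasis' hα).basis.map (Subring.closureEquivAdjoinInt _).toLinearEquiv.symm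

section

variable {K : Type*} [Field K]

/-- `R = ℤ + p S` and `𝔪 = p S`, as subsets of `K`. -/
structure IsIntAddMul (S : Subring K) (p : ℕ) (R : Subring K) (𝔪 : Ideal R) : Prop where
  coe_eq : (R : Set K) = {x | ∃ m : ℤ, ∃ w ∈ S, x = m + p * w}
  mem_iff : ∀ x : R, x ∈ 𝔪 ↔ ∃ w ∈ S, (x : K) = p * w

namespace IsIntAddMul

variable {S R : Subring K} {p : ℕ} {𝔪 : Ideal R}

theorem mul_mem (h : IsIntAddMul S p R 𝔪) {w : K} (hw : w ∈ S) : (p : K) * w ∈ R := by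
  rw [← SetLike.mem_coe, h.coe_eq]
  exact ⟨0, w, hw, by simp⟩

theorem intCast_mem_iff [CharZero K] [Module.Finite ℤ S] (h : IsIntAddMul S p R 𝔪) (m : ℤ) :
    (m : R) ∈ 𝔪 ↔ (p : ℤ) ∣ m := by
  rw [h.mem_iff]
  constructor
  · rintro ⟨w, hw, hmw⟩
    refine dvd_of_intCast_eq_mul_of_isIntegral ?_ (by exact_mod_cast hmw)
    exact map_isIntegral_int S.subtype (Algebra.IsIntegral.isIntegral (⟨w, hw⟩ : S))
  · rintro ⟨k, rfl⟩
    exact ⟨k, intCast_mem S k, by push_cast; rfl⟩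

theorem intCast_surjective (h : IsIntAddMul S p R 𝔪) :
    Function.Surjective (Int.castRingHom (R ⧸ 𝔪)) := by
  intro y
  obtain ⟨x, rfl⟩ := Ideal.Quotient.mk_surjective y
  have hx : (x : K) ∈ (R : Set K) := x.2
  rw [h.coe_eq] at hx
  obtain ⟨m, w, hw, hx⟩ := hx
  refine ⟨m, ?_⟩
  rw [eq_intCast, ← map_intCast (Ideal.Quotient.mk 𝔪), Ideal.Quotient.mk_eq_mk_iff_sub_mem,
    h.mem_iff]
  exact ⟨-w, neg_mem hw, by push_cast [hx]; ring⟩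

noncomputable def quotientEquivZMod [CharZero K] [Module.Finite ℤ S]
    (h : IsIntAddMul S p R 𝔪) : R ⧸ 𝔪 ≃+* ZMod p :=
  have hker : RingHom.ker (Int.castRingHom (R ⧸ 𝔪)) = Ideal.span {(p : ℤ)} := by
    ext m
    rw [RingHom.mem_ker, eq_intCast, ← map_intCast (Ideal.Quotient.mk 𝔪),
      Ideal.Quotient.eq_zero_iff_mem, h.intCast_mem_iff, Ideal.mem_span_singleton]
  (RingHom.quotientKerEquivOfSurjective h.intCast_surjective).symm.trans <|
    (Ideal.quotEquivOfEq hker).trans (Int.quotientSpanNatEquivZMod p)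

theorem mem_sq_iff (h : IsIntAddMul S p R 𝔪) (x : R) :
    x ∈ 𝔪 ^ 2 ↔ ∃ w ∈ S, (x : K) = p ^ 2 * w := by
  rw [pow_two]
  constructor
  · intro hx
    refine Submodule.mul_induction_on hx ?_ ?_
    · intro a ha b hb
      obtain ⟨u, hu, hau⟩ := (h.mem_iff a).mp ha
      obtain ⟨v, hv, hbv⟩ := (h.mem_iff b).mp hb
      exact ⟨u * v, Subring.mul_mem _ hu hv, by push_cast [hau, hbv]; ring⟩
    · rintro a b ⟨u, hu, hau⟩ ⟨v, hv, hbv⟩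
      exact ⟨u + v, add_mem hu hv, by push_cast [hau, hbv]; ring⟩
  · rintro ⟨w, hw, hxw⟩
    let pR : R := ⟨p, mul_one (p : K) ▸ h.mul_mem (one_mem S)⟩
    let pwR : R := ⟨p * w, h.mul_mem hw⟩
    have hx : x = pR * pwR := Subtype.ext <| by simp [pR, pwR, hxw]; ring
    rw [hx]
    exact Ideal.mul_mem_mul ((h.mem_iff _).2 ⟨1, one_mem S, by simp [pR]⟩)
      ((h.mem_iff _).2 ⟨w, hw, rfl⟩)

noncomputable def toCotangent (h : IsIntAddMul S p R 𝔪) : S →ₗ[ℤ] 𝔪.Cotangent :=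
  AddMonoidHom.toIntLinearMap <| 𝔪.toCotangent.toAddMonoidHom.comp
    { toFun w := ⟨⟨p * w, h.mul_mem w.2⟩, (h.mem_iff _).2 ⟨w, w.2, rfl⟩⟩
      map_zero' := by ext; simp
      map_add' u v := by ext; simp [mul_add] }

theorem toCotangent_apply (h : IsIntAddMul S p R 𝔪) (w : S) :
    h.toCotangent w =
      𝔪.toCotangent ⟨⟨p * w, h.mul_mem w.2⟩, (h.mem_iff _).2 ⟨w, w.2, rfl⟩⟩ := rfl

theorem toCotangent_surjective (h : IsIntAddMul S p R 𝔪) :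
    Function.Surjective h.toCotangent := by
  intro y
  obtain ⟨⟨x, hx⟩, rfl⟩ := 𝔪.toCotangent_surjective y
  obtain ⟨w, hw, hxw⟩ := (h.mem_iff x).mp hx
  exact ⟨⟨w, hw⟩, by rw [toCotangent_apply]; congr; exact hxw.symm⟩

theorem ker_toCotangent [CharZero K] (h : IsIntAddMul S p R 𝔪) (hp : p ≠ 0) :
    LinearMap.ker h.toCotangent = (p : ℤ) • ⊤ := by
  ext w
  rw [LinearMap.mem_ker, toCotangent_apply, Ideal.toCotangent_eq_zero, h.mem_sq_iff,
    Submodule.mem_smul_pointwise_iff_exists]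
  constructor
  · rintro ⟨v, hv, hwv⟩
    refine ⟨⟨v, hv⟩, trivial, Subtype.ext ?_⟩
    have hp' : (p : K) ≠ 0 := by exact_mod_cast hp
    have : (p : K) * w = p * (p * v) := by simpa [pow_two, mul_assoc] using hwv
    simpa using (mul_left_cancel₀ hp' this).symm
  · rintro ⟨v, -, rfl⟩
    exact ⟨v, v.2, by simp [pow_two, mul_assoc]⟩

theorem natCard_cotangent [CharZero K] [Module.Free ℤ S] [Module.Finite ℤ S]
    (h : IsIntAddMul S p R 𝔪) (hp : p ≠ 0) :
    Nat.card 𝔪.Cotangent = p ^ finrank ℤ S := by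
  have e := (Submodule.quotEquivOfEq _ _ (h.ker_toCotangent hp).symm).trans
    (h.toCotangent.quotKerEquivOfSurjective h.toCotangent_surjective)
  rw [← Nat.card_congr e.toEquiv, Submodule.natCard_quotient_smul_top (by exact_mod_cast hp),
    Int.natAbs_natCast]

end IsIntAddMul

end

/-- Let `α` be an algebraic integer of degree `n` (a root of a monic irreducible integer
polynomial of degree `n`), `p` a prime, and `R = ℤ + pℤ[α]`. Then `𝔪 = pℤ[α]` is a maximal
ideal of `R` and `dim_{𝔽_p}(𝔪/𝔪²) = n` (the residue field `R/𝔪` is `𝔽_p`). -/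
theorem stmt10 (n : ℕ) (α : ℂ) (f : Polynomial ℤ) (hmonic : f.Monic)
    (hirr : Irreducible f) (hdeg : f.natDegree = n)
    (hroot : Polynomial.aeval α f = 0)
    (p : ℕ) (hp : p.Prime)
    (R : Subring ℂ)
    (hR : (R : Set ℂ) = {x | ∃ m : ℤ, ∃ w ∈ Subring.closure {α}, x = m + p * w})
    (𝔪 : Ideal ↥R)
    (h𝔪 : ∀ x : ↥R, x ∈ 𝔪 ↔ ∃ w ∈ Subring.closure {α}, (x : ℂ) = p * w) :
    𝔪.IsMaximal ∧ Module.finrank (↥R ⧸ 𝔪) 𝔪.Cotangent = n := by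
  have : Fact p.Prime := ⟨hp⟩
  have h : IsIntAddMul (Subring.closure {α}) p R 𝔪 := ⟨hR, h𝔪⟩
  have hα : IsIntegral ℤ α := ⟨f, hmonic, hroot⟩
  let b := Subring.closureSingletonBasis hα
  have : Module.Free ℤ (Subring.closure {α}) := .of_basis b
  have : Module.Finite ℤ (Subring.closure {α}) := .of_basis b
  have hrank : finrank ℤ (Subring.closure {α}) = n := by
    rw [finrank_eq_card_basis b, Fintype.card_fin, Algebra.adjoin.powerBasis'_dim,
      ← minpoly.eq_of_irreducible_of_monic_of_isIntegrallyClosed hirr hroot hmonic, hdeg]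
  let e := h.quotientEquivZMod
  have hmax : 𝔪.IsMaximal :=
    Ideal.Quotient.maximal_of_isField _ (e.toMulEquiv.isField (Field.toIsField _))
  refine ⟨hmax, ?_⟩
  let _ := Ideal.Quotient.field 𝔪
  have : Finite (R ⧸ 𝔪) := .of_equiv _ e.symm.toEquiv
  have hcard := h.natCard_cotangent hp.ne_zero
  have : Finite 𝔪.Cotangent := Nat.finite_of_card_ne_zero (by simp [hcard, hp.ne_zero])
  apply Module.finrank_eq_of_natCard_eq_pow
  rw [hcard, Nat.card_congr e.toEquiv, Nat.card_zmod, hrank]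
end

section
/- Let α be a root of a monic irreducible integer polynomial of degree 4, p a prime, R = ℤ + pℤ[α], I = pR + pαR, and J = pR + pα²R. Then N(I) = N(J) = p³ while N(IJ) = p⁵; in particular N(I)N(J) > N(IJ). -/
/-!
In the coordinates of the `ℤ`-basis `1, pα, pα², pα³` of `R = ℤ + pℤ[α]` all three ideals are
cut out by divisibility conditions. Writing `R ∋ x = v₀ + p(v₁α + v₂α² + v₃α³)`, one has
`I = pℤ + pαℤ + p²ℤ[α] = {p ∣ v₀, v₂, v₃}` and `J = pℤ + pα²ℤ + p²ℤ[α] = {p ∣ v₀, v₁, v₃}`.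
Since `I, J ⊆ pℤ[α]` we get `IJ ⊆ p²ℤ[α]`, and conversely `p²ℤ[α] ⊆ IJ` because
`p², p²α, p²α², p²α³ = pα · pα²` are products of generators; so `IJ = {p² ∣ v₀, p ∣ v₁, v₂, v₃}`.
The indices are `p³`, `p³` and `p⁵`. The powers `1, α, α², α³` are independent because `f` stays
irreducible over `ℚ` (Gauss), and they span `ℤ[α]` by division with remainder by the monic `f`.
-/

open Polynomial

theorem AddSubgroup.card_quotient_eq_prod_of_forall_dvd {G ι : Type*} [AddCommGroup G]
    [Fintype ι] {S : AddSubgroup G} (φ : (ι → ℤ) →+ G) (hφ : Function.Surjective φ)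
    (d : ι → ℕ) (hS : ∀ v, φ v ∈ S ↔ ∀ i, (d i : ℤ) ∣ v i) :
    Nat.card (G ⧸ S) = ∏ i, d i := by
  have hcomap : S.comap φ = AddSubgroup.pi Set.univ fun i ↦ AddSubgroup.zmultiples (d i : ℤ) := by
    ext v
    simp [hS, AddSubgroup.mem_pi, Int.mem_zmultiples_iff]
  rw [← AddSubgroup.index, ← AddSubgroup.index_comap_of_surjective S hφ, hcomap,
    AddSubgroup.index_pi]
  simp [Int.index_zmultiples]

section

variable {A : Type*} [CommRing A]

def Subring.intAddMul (O : Subring A) (p : ℕ) : Subring A where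
  carrier := {x | ∃ m : ℤ, ∃ w ∈ O, x = m + p * w}
  zero_mem' := ⟨0, 0, O.zero_mem, by simp⟩
  one_mem' := ⟨1, 0, O.zero_mem, by simp⟩
  add_mem' := by
    rintro _ _ ⟨m, w, hw, rfl⟩ ⟨m', w', hw', rfl⟩
    exact ⟨m + m', w + w', O.add_mem hw hw', by push_cast; ring⟩
  neg_mem' := by
    rintro _ ⟨m, w, hw, rfl⟩
    exact ⟨-m, -w, O.neg_mem hw, by push_cast; ring⟩
  mul_mem' := by
    rintro _ _ ⟨m, w, hw, rfl⟩ ⟨m', w', hw', rfl⟩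
    refine ⟨m * m', m * w' + m' * w + p * (w * w'), ?_, by push_cast; ring⟩
    exact O.add_mem (O.add_mem (O.mul_mem (intCast_mem O m) hw') (O.mul_mem (intCast_mem O m') hw))
      (O.mul_mem (natCast_mem O p) (O.mul_mem hw hw'))

theorem Subring.exists_eq_of_mem_span_pair {O : Subring A} {p : ℕ} {a b : O.intAddMul p}
    {β : A} (hβ : β ∈ O) (ha : (a : A) = p) (hb : (b : A) = p * β) {x : O.intAddMul p}
    (hx : x ∈ Ideal.span {a, b}) :
    ∃ m n : ℤ, ∃ w ∈ O, (x : A) = p * m + p * β * n + p ^ 2 * w := by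
  obtain ⟨r, s, rfl⟩ := Ideal.mem_span_pair.1 hx
  obtain ⟨m, w, hw, hr⟩ := r.2
  obtain ⟨n, w', hw', hs⟩ := s.2
  refine ⟨m, n, w + β * w', O.add_mem hw (O.mul_mem hβ hw'), ?_⟩
  push_cast
  rw [ha, hb, hr, hs]
  ring

theorem Subring.exists_eq_mul_of_mem_span_pair {O : Subring A} {p : ℕ} {a b : O.intAddMul p}
    {β : A} (hβ : β ∈ O) (ha : (a : A) = p) (hb : (b : A) = p * β) {x : O.intAddMul p}
    (hx : x ∈ Ideal.span {a, b}) : ∃ w ∈ O, (x : A) = p * w := by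
  obtain ⟨m, n, w, hw, hx⟩ := exists_eq_of_mem_span_pair hβ ha hb hx
  refine ⟨m + β * n + p * w, ?_, by rw [hx]; ring⟩
  exact O.add_mem (O.add_mem (intCast_mem O m) (O.mul_mem hβ (intCast_mem O n)))
    (O.mul_mem (natCast_mem O p) hw)

theorem Subring.exists_eq_sq_mul_of_mem_mul {R O : Subring A} {t : A} {I J : Ideal R}
    (hI : ∀ x ∈ I, ∃ w ∈ O, (x : A) = t * w) (hJ : ∀ x ∈ J, ∃ w ∈ O, (x : A) = t * w)
    {x : R} (hx : x ∈ I * J) : ∃ w ∈ O, (x : A) = t ^ 2 * w := by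
  refine Submodule.mul_induction_on hx (fun i hi j hj ↦ ?_) ?_
  · obtain ⟨u, hu, hiu⟩ := hI i hi
    obtain ⟨u', hu', hju⟩ := hJ j hj
    exact ⟨u * u', O.mul_mem hu hu', by push_cast; rw [hiu, hju]; ring⟩
  · rintro _ _ ⟨u, hu, hxu⟩ ⟨u', hu', hyu⟩
    exact ⟨u + u', O.add_mem hu hu', by push_cast; rw [hxu, hyu]; ring⟩

theorem exists_eq_sum_pow_of_mem_closure [Nontrivial A] {α : A} {f : ℤ[X]} (hmonic : f.Monic)
    (hroot : aeval α f = 0) {w : A} (hw : w ∈ Subring.closure {α}) :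
    ∃ c : Fin f.natDegree → ℤ, w = ∑ i, c i • α ^ (i : ℕ) := by
  obtain ⟨g, rfl⟩ : ∃ g : ℤ[X], aeval α g = w := by
    have : Subring.closure {α} ≤ (aeval (R := ℤ) α).toRingHom.range :=
      Subring.closure_le.2 (by simpa using ⟨X, aeval_X α⟩)
    exact this hw
  refine ⟨fun i ↦ (g %ₘ f).coeff i, ?_⟩
  have hf1 : f ≠ 1 := by
    rintro rfl
    simp at hroot
  rw [← aeval_modByMonic_eq_self_of_root hroot,
    aeval_eq_sum_range' (natDegree_modByMonic_lt g hmonic hf1), Finset.sum_range]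
theorem sum_fin_four_zsmul_pow (α : A) (c : Fin 4 → ℤ) :
    ∑ i, c i • α ^ (i : ℕ) = c 0 + c 1 * α + c 2 * α ^ 2 + c 3 * α ^ 3 := by
  simp [Fin.sum_univ_four]

end

theorem linearIndependent_pow_of_monic_of_irreducible {K : Type*} [Field K] [CharZero K] {α : K}
    {f : ℤ[X]} (hmonic : f.Monic) (hirr : Irreducible f) (hroot : aeval α f = 0) :
    LinearIndependent ℤ fun i : Fin f.natDegree ↦ α ^ (i : ℕ) := by
  have hmin : minpoly ℚ α = f.map (algebraMap ℤ ℚ) :=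
    (minpoly.eq_of_irreducible_of_monic (hmonic.irreducible_iff_irreducible_map_fraction_map.1 hirr)
      (by rw [aeval_map_algebraMap, hroot]) (hmonic.map _)).symm
  have h := linearIndependent_pow (K := ℚ) α
  rw [hmin, hmonic.natDegree_map] at h
  exact h.restrict_scalars' (R := ℤ)

section Quartic

variable {K : Type*} [Field K] {α : K} {p : ℕ} {f : ℤ[X]}

def latticePoint (α : K) (p : ℕ) : (Fin 4 → ℤ) →+ (Subring.closure {α}).intAddMul p where
  toFun v := ⟨v 0 + p * (v 1 * α + v 2 * α ^ 2 + v 3 * α ^ 3), by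
    have hα : α ∈ Subring.closure {α} := Subring.subset_closure rfl
    refine ⟨v 0, v 1 * α + v 2 * α ^ 2 + v 3 * α ^ 3, ?_, rfl⟩
    have := intCast_mem (Subring.closure {α})
    exact add_mem (add_mem (mul_mem (this _) hα) (mul_mem (this _) (pow_mem hα 2)))
      (mul_mem (this _) (pow_mem hα 3))⟩
  map_zero' := Subtype.ext (by simp)
  map_add' v w := Subtype.ext (by simp only [Pi.add_apply]; push_cast; ring)

@[simp]
theorem coe_latticePoint (v : Fin 4 → ℤ) :
    (latticePoint α p v : K) = v 0 + p * (v 1 * α + v 2 * α ^ 2 + v 3 * α ^ 3) := rfl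

theorem coe_latticePoint_vec (m n k l : ℤ) :
    (latticePoint α p ![m, n, k, l] : K) = m + p * (n * α + k * α ^ 2 + l * α ^ 3) := rfl

theorem latticePoint_injective [CharZero K] (hmonic : f.Monic) (hirr : Irreducible f)
    (hdeg : f.natDegree = 4) (hroot : aeval α f = 0) (hp : p ≠ 0) :
    Function.Injective (latticePoint α p) := by
  have hli := linearIndependent_pow_of_monic_of_irreducible hmonic hirr hroot
  rw [hdeg] at hli
  refine (injective_iff_map_eq_zero _).2 fun v hv ↦ ?_
  have h := Fintype.linearIndependent_iff.1 hli ![v 0, p * v 1, p * v 2, p * v 3]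
    (by
      have hv' : (v 0 : K) + p * (v 1 * α + v 2 * α ^ 2 + v 3 * α ^ 3) = 0 :=
        congrArg Subtype.val hv
      rw [sum_fin_four_zsmul_pow]
      simp only [Matrix.cons_val]
      push_cast
      linear_combination hv')
  ext i
  fin_cases i
  exacts [h 0, by simpa [hp] using h 1, by simpa [hp] using h 2, by simpa [hp] using h 3]

theorem exists_mul_eq_latticePoint (hmonic : f.Monic) (hdeg : f.natDegree = 4)
    (hroot : aeval α f = 0) {w : K} (hw : w ∈ Subring.closure {α}) :
    ∃ c : Fin 4 → ℤ, p * w = latticePoint α p ![p * c 0, c 1, c 2, c 3] := by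
  have h := exists_eq_sum_pow_of_mem_closure hmonic hroot hw
  rw [hdeg] at h
  obtain ⟨c, rfl⟩ := h
  refine ⟨c, ?_⟩
  rw [sum_fin_four_zsmul_pow, coe_latticePoint_vec]
  push_cast
  ring

theorem latticePoint_surjective (hmonic : f.Monic) (hdeg : f.natDegree = 4)
    (hroot : aeval α f = 0) : Function.Surjective (latticePoint α p) := by
  rintro ⟨_, m, w, hw, rfl⟩
  obtain ⟨c, hc⟩ := exists_mul_eq_latticePoint hmonic hdeg hroot hw
  refine ⟨![m + p * c 0, c 1, c 2, c 3], Subtype.ext ?_⟩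
  rw [coe_latticePoint_vec] at hc ⊢
  push_cast at hc ⊢
  linear_combination -hc

variable {a b c : (Subring.closure {α}).intAddMul p}

theorem latticePoint_mem_span_alpha_iff (hmonic : f.Monic) (hdeg : f.natDegree = 4)
    (hroot : aeval α f = 0) (hinj : Function.Injective (latticePoint α p))
    (ha : (a : K) = p) (hb : (b : K) = p * α) (v : Fin 4 → ℤ) :
    latticePoint α p v ∈ Ideal.span {a, b} ↔ (p : ℤ) ∣ v 0 ∧ (p : ℤ) ∣ v 2 ∧ (p : ℤ) ∣ v 3 := by
  have hα : α ∈ Subring.closure {α} := Subring.subset_closure rfl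
  constructor
  · intro hv
    obtain ⟨m, n, w, hw, hvw⟩ := Subring.exists_eq_of_mem_span_pair hα ha hb hv
    obtain ⟨e, he⟩ := exists_mul_eq_latticePoint (p := p) hmonic hdeg hroot hw
    obtain rfl : v = ![p * m + p * (p * e 0), n + p * e 1, p * e 2, p * e 3] := by
      refine hinj (Subtype.ext ?_)
      rw [coe_latticePoint_vec] at he
      rw [hvw, coe_latticePoint_vec]
      push_cast at he ⊢
      linear_combination p * he
    exact ⟨⟨m + p * e 0, by simp only [Matrix.cons_val]; ring⟩, dvd_mul_right _ _,
      dvd_mul_right _ _⟩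
  · rintro ⟨⟨m, hm⟩, ⟨k, hk⟩, ⟨l, hl⟩⟩
    refine Ideal.mem_span_pair.2 ⟨m, latticePoint α p ![v 1, k, l, 0], Subtype.ext ?_⟩
    push_cast [coe_latticePoint, coe_latticePoint_vec, ha, hb, hm, hk, hl]
    ring

theorem latticePoint_mem_span_alpha_sq_iff (hmonic : f.Monic) (hdeg : f.natDegree = 4)
    (hroot : aeval α f = 0) (hinj : Function.Injective (latticePoint α p))
    (ha : (a : K) = p) (hc : (c : K) = p * α ^ 2) (v : Fin 4 → ℤ) :
    latticePoint α p v ∈ Ideal.span {a, c} ↔ (p : ℤ) ∣ v 0 ∧ (p : ℤ) ∣ v 1 ∧ (p : ℤ) ∣ v 3 := by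
  have hα : α ∈ Subring.closure {α} := Subring.subset_closure rfl
  constructor
  · intro hv
    obtain ⟨m, n, w, hw, hvw⟩ := Subring.exists_eq_of_mem_span_pair (pow_mem hα 2) ha hc hv
    obtain ⟨e, he⟩ := exists_mul_eq_latticePoint (p := p) hmonic hdeg hroot hw
    obtain rfl : v = ![p * m + p * (p * e 0), p * e 1, n + p * e 2, p * e 3] := by
      refine hinj (Subtype.ext ?_)
      rw [coe_latticePoint_vec] at he
      rw [hvw, coe_latticePoint_vec]
      push_cast at he ⊢
      linear_combination p * he
    exact ⟨⟨m + p * e 0, by simp only [Matrix.cons_val]; ring⟩, dvd_mul_right _ _,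
      dvd_mul_right _ _⟩
  · rintro ⟨⟨m, hm⟩, ⟨k, hk⟩, ⟨l, hl⟩⟩
    refine Ideal.mem_span_pair.2
      ⟨latticePoint α p ![m, k, 0, 0], latticePoint α p ![v 2, l, 0, 0], Subtype.ext ?_⟩
    push_cast [coe_latticePoint, coe_latticePoint_vec, ha, hc, hm, hk, hl]
    ring

theorem latticePoint_mem_span_alpha_mul_span_alpha_sq_iff (hmonic : f.Monic)
    (hdeg : f.natDegree = 4) (hroot : aeval α f = 0) (hinj : Function.Injective (latticePoint α p))
    (ha : (a : K) = p) (hb : (b : K) = p * α) (hc : (c : K) = p * α ^ 2) (v : Fin 4 → ℤ) :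
    latticePoint α p v ∈ Ideal.span {a, b} * Ideal.span {a, c} ↔
      (p : ℤ) ^ 2 ∣ v 0 ∧ (p : ℤ) ∣ v 1 ∧ (p : ℤ) ∣ v 2 ∧ (p : ℤ) ∣ v 3 := by
  have hα : α ∈ Subring.closure {α} := Subring.subset_closure rfl
  constructor
  · intro hv
    obtain ⟨w, hw, hvw⟩ := Subring.exists_eq_sq_mul_of_mem_mul
      (fun _ ↦ Subring.exists_eq_mul_of_mem_span_pair hα ha hb)
      (fun _ ↦ Subring.exists_eq_mul_of_mem_span_pair (pow_mem hα 2) ha hc) hv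
    obtain ⟨e, he⟩ := exists_mul_eq_latticePoint (p := p) hmonic hdeg hroot hw
    obtain rfl : v = ![p * (p * e 0), p * e 1, p * e 2, p * e 3] := by
      refine hinj (Subtype.ext ?_)
      rw [coe_latticePoint_vec] at he
      rw [hvw, coe_latticePoint_vec]
      push_cast at he ⊢
      linear_combination p * he
    exact ⟨⟨e 0, by simp only [Matrix.cons_val]; ring⟩, dvd_mul_right _ _, dvd_mul_right _ _,
      dvd_mul_right _ _⟩
  · rintro ⟨⟨m, hm⟩, ⟨n, hn⟩, ⟨k, hk⟩, ⟨l, hl⟩⟩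
    have haI : a ∈ Ideal.span {a, b} := Ideal.subset_span (by simp)
    have hbI : b ∈ Ideal.span {a, b} := Ideal.subset_span (by simp)
    have haJ : a ∈ Ideal.span {a, c} := Ideal.subset_span (by simp)
    have hcJ : c ∈ Ideal.span {a, c} := Ideal.subset_span (by simp)
    have hv : latticePoint α p v = a * a * m + b * a * n + a * c * k + b * c * l :=
      Subtype.ext (by push_cast [coe_latticePoint, ha, hb, hc, hm, hn, hk, hl]; ring)
    rw [hv]
    refine add_mem (add_mem (add_mem ?_ ?_) ?_) ?_ <;> refine Ideal.mul_mem_right _ _ ?_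
    exacts [Ideal.mul_mem_mul haI haJ, Ideal.mul_mem_mul hbI haJ, Ideal.mul_mem_mul haI hcJ,
      Ideal.mul_mem_mul hbI hcJ]

end Quartic

/-- Let `α` be a root of a monic irreducible integer polynomial of degree `4`, `p` a prime,
`R = ℤ + pℤ[α]`, `I = pR + pαR` and `J = pR + pα²R`. Then `N(I) = N(J) = p³` while
`N(IJ) = p⁵`; in particular `N(IJ) < N(I)·N(J)`. -/
theorem stmt11 (α : ℂ) (f : Polynomial ℤ) (hmonic : f.Monic) (hirr : Irreducible f)
    (hdeg : f.natDegree = 4) (hroot : Polynomial.aeval α f = 0)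
    (p : ℕ) (hp : p.Prime)
    (R : Subring ℂ)
    (hR : (R : Set ℂ) = {x | ∃ m : ℤ, ∃ w ∈ Subring.closure {α}, x = m + p * w})
    (a b c : ↥R) (ha : (a : ℂ) = p) (hb : (b : ℂ) = p * α) (hc : (c : ℂ) = p * α ^ 2) :
    Nat.card (↥R ⧸ Ideal.span {a, b}) = p ^ 3 ∧
    Nat.card (↥R ⧸ Ideal.span {a, c}) = p ^ 3 ∧
    Nat.card (↥R ⧸ (Ideal.span {a, b} * Ideal.span {a, c})) = p ^ 5 ∧
    Nat.card (↥R ⧸ (Ideal.span {a, b} * Ideal.span {a, c})) <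
      Nat.card (↥R ⧸ Ideal.span {a, b}) * Nat.card (↥R ⧸ Ideal.span {a, c}) := by
  obtain rfl : R = (Subring.closure {α}).intAddMul p := SetLike.coe_injective hR
  have hinj := latticePoint_injective hmonic hirr hdeg hroot hp.ne_zero
  have hsurj := latticePoint_surjective (p := p) hmonic hdeg hroot
  have hI : Nat.card (_ ⧸ Ideal.span {a, b}) = p ^ 3 := by
    refine (AddSubgroup.card_quotient_eq_prod_of_forall_dvd _ hsurj ![p, 1, p, p]
      fun v ↦ ?_).trans ?_
    · simpa [Fin.forall_fin_succ] using
        latticePoint_mem_span_alpha_iff hmonic hdeg hroot hinj ha hb v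
    · simp only [Fin.prod_univ_four, Matrix.cons_val]; ring
  have hJ : Nat.card (_ ⧸ Ideal.span {a, c}) = p ^ 3 := by
    refine (AddSubgroup.card_quotient_eq_prod_of_forall_dvd _ hsurj ![p, p, 1, p]
      fun v ↦ ?_).trans ?_
    · simpa [Fin.forall_fin_succ] using
        latticePoint_mem_span_alpha_sq_iff hmonic hdeg hroot hinj ha hc v
    · simp only [Fin.prod_univ_four, Matrix.cons_val]; ring
  have hIJ : Nat.card (_ ⧸ Ideal.span {a, b} * Ideal.span {a, c}) = p ^ 5 := by
    refine (AddSubgroup.card_quotient_eq_prod_of_forall_dvd _ hsurj ![p ^ 2, p, p, p]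
      fun v ↦ ?_).trans ?_
    · simpa [Fin.forall_fin_succ] using
        latticePoint_mem_span_alpha_mul_span_alpha_sq_iff hmonic hdeg hroot hinj ha hb hc v
    · simp only [Fin.prod_univ_four, Matrix.cons_val]; ring
  refine ⟨hI, hJ, hIJ, ?_⟩
  rw [hI, hJ, hIJ, ← pow_add]
  exact Nat.pow_lt_pow_right hp.one_lt (by norm_num)
end

section
/- Let α be a root of a monic irreducible integer polynomial of degree 4, p a prime, R = ℤ + pℤ[α], I = pR + pαR, and M = pℤ[α]. Then N(I)·N(M) = p⁴ < p⁵ = N(IM). -/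
/-!
`ℤ[α]` is a free `ℤ`-module on `1, α, α², α³`. In these coordinates `R = ℤ + pℤ[α]`,
`M = pℤ[α]`, `I = p(ℤ + ℤα + pℤ[α])` and `IM = p²ℤ[α]` are the sublattices cut out by
divisibility of the coordinates by `(1, p, p, p)`, `(p, p, p, p)`, `(p, p, p², p²)` and
`(p², p², p², p²)`, so their indices in `ℤ[α]` are `p³, p⁴, p⁶, p⁸`. Since
`[ℤ[α] : J] = N(J) · [ℤ[α] : R]` for an ideal `J` of `R`, this gives `N(M) = p`,
`N(I) = p³` and `N(IM) = p⁵`.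
-/

open Polynomial

theorem IsIntegrallyClosed.eq_minpoly_of_irreducible_of_monic {R S : Type*} [CommRing R]
    [IsDomain R] [IsIntegrallyClosed R] [CommRing S] [IsDomain S] [Algebra R S]
    [Module.IsTorsionFree R S] {x : S} {f : R[X]} (hirr : Irreducible f) (hroot : aeval x f = 0)
    (hmonic : f.Monic) : f = minpoly R x := by
  have hx : IsIntegral R x := ⟨f, hmonic, hroot⟩
  refine eq_of_monic_of_associated hmonic (minpoly.monic hx) ?_
  exact ((minpoly.irreducible hx).associated_of_dvd hirr
    (minpoly.isIntegrallyClosed_dvd hx hroot)).symm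

theorem Module.Basis.forall_dvd_repr_iff {ι M : Type*} [AddCommGroup M] [Module ℤ M]
    (b : Module.Basis ι ℤ M) (n : ℤ) (x : M) :
    (∀ i, n ∣ b.repr x i) ↔ ∃ y, x = n • y := by
  refine ⟨fun h ↦ ⟨b.repr.symm ((b.repr x).mapRange (· / n) (Int.zero_ediv n)), ?_⟩, ?_⟩
  · refine b.repr.injective (Finsupp.ext fun i ↦ ?_)
    simp [Int.mul_ediv_cancel' (h i)]
  · rintro ⟨y, rfl⟩ i
    simp

theorem AddSubgroup.index_eq_prod_of_basis {M ι : Type*} [AddCommGroup M] [Module ℤ M]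
    [Fintype ι] (b : Module.Basis ι ℤ M) (n : ι → ℕ) (S : AddSubgroup M)
    (hS : ∀ x, x ∈ S ↔ ∀ i, (n i : ℤ) ∣ b.repr x i) : S.index = ∏ i, n i := by
  have : S = (AddSubgroup.pi Set.univ fun i ↦ AddSubgroup.zmultiples (n i : ℤ)).comap
      b.equivFun.toAddMonoidHom := by
    ext x
    simp [hS, AddSubgroup.mem_pi, Int.mem_zmultiples_iff]
  rw [this, AddSubgroup.index_comap_of_surjective _ b.equivFun.surjective, AddSubgroup.index_pi]
  simp [Int.index_zmultiples]

theorem AddSubgroup.relIndex_eq_prod_of_basis {G ι : Type*} [AddCommGroup G] [Fintype ι]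
    (L : Submodule ℤ G) (b : Module.Basis ι ℤ L) (n : ι → ℕ) (H : AddSubgroup G)
    (hH : ∀ x : L, (x : G) ∈ H ↔ ∀ i, (n i : ℤ) ∣ b.repr x i) :
    H.relIndex L.toAddSubgroup = ∏ i, n i :=
  AddSubgroup.index_eq_prod_of_basis b n _ hH

theorem Subring.card_quotient_mul_relIndex {A : Type*} [Ring A] (R : Subring A) (J : Ideal R)
    (L : AddSubgroup A) (hRL : R.toAddSubgroup ≤ L) :
    Nat.card (R ⧸ J) * R.toAddSubgroup.relIndex L =
      (J.toAddSubgroup.map R.toAddSubgroup.subtype).relIndex L := by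
  rw [← AddSubgroup.relIndex_mul_relIndex _ _ _ (AddSubgroup.map_subtype_le _) hRL]
  congr 1
  exact congrArg AddSubgroup.index
    (AddSubgroup.comap_map_eq_self_of_injective R.toAddSubgroup.subtype_injective _).symm

theorem Ideal.mem_map_subtype_iff {A : Type*} [Ring A] {R : Subring A} {J : Ideal R}
    {P : A → Prop} (hJ : ∀ y : R, y ∈ J ↔ P y) (hPR : ∀ x, P x → x ∈ R) (x : A) :
    x ∈ J.toAddSubgroup.map R.toAddSubgroup.subtype ↔ P x := by
  refine ⟨?_, fun hx ↦ ⟨⟨x, hPR x hx⟩, (hJ _).2 hx, rfl⟩⟩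
  rintro ⟨y, hy, rfl⟩
  exact (hJ y).1 hy

namespace PowerBasis

variable {S : Type*} [CommRing S] (pb : PowerBasis ℤ S)

theorem basis_repr_gen_pow {k : ℕ} (hk : k < pb.dim) :
    pb.basis.repr (pb.gen ^ k) = Finsupp.single ⟨k, hk⟩ 1 := by
  rw [← pb.basis_eq_pow ⟨k, hk⟩, pb.basis.repr_self]

theorem basis_repr_sub_zsmul_gen_pow (x : S) (m : ℤ) {k : ℕ} (hk : k < pb.dim)
    (i : Fin pb.dim) :
    pb.basis.repr (x - m • pb.gen ^ k) i =
      pb.basis.repr x i - if (i : ℕ) = k then m else 0 := by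
  rw [map_sub, map_zsmul, pb.basis_repr_gen_pow hk]
  simp [Finsupp.single_apply, Fin.ext_iff, eq_comm]

theorem exists_eq_intCast_add_smul_iff [Nontrivial S] (n : ℤ) (x : S) :
    (∃ m : ℤ, ∃ y, x = m + n • y) ↔
      ∀ i : Fin pb.dim, (if (i : ℕ) = 0 then 1 else n) ∣ pb.basis.repr x i := by
  have key (m : ℤ) : (∃ y, x = m + n • y) ↔
      ∀ i, n ∣ pb.basis.repr x i - if (i : ℕ) = 0 then m else 0 := by
    simp_rw [← pb.basis_repr_sub_zsmul_gen_pow x m pb.dim_pos, pb.basis.forall_dvd_repr_iff,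
      pow_zero, zsmul_one, sub_eq_iff_eq_add']
  simp_rw [key]
  constructor
  · rintro ⟨m, h⟩ i
    split_ifs with hi
    · exact one_dvd _
    · simpa [hi] using h i
  · intro h
    refine ⟨pb.basis.repr x ⟨0, pb.dim_pos⟩, fun i ↦ ?_⟩
    split_ifs with hi
    · simp [show i = ⟨0, pb.dim_pos⟩ from Fin.ext hi]
    · simpa [hi] using h i

theorem exists_eq_smul_intCast_add_zsmul_gen_add_smul_iff (hdim : 1 < pb.dim) (n : ℤ) (x : S) :
    (∃ m₀ m₁ : ℤ, ∃ y, x = n • ((m₀ : S) + m₁ • pb.gen + n • y)) ↔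
      ∀ i : Fin pb.dim, (if (i : ℕ) < 2 then n else n ^ 2) ∣ pb.basis.repr x i := by
  have hdim₀ : 0 < pb.dim := zero_lt_one.trans hdim
  have key (m₀ m₁ : ℤ) : (∃ y, x = n • ((m₀ : S) + m₁ • pb.gen + n • y)) ↔
      ∀ i, n ^ 2 ∣ pb.basis.repr x i - (if (i : ℕ) = 0 then n * m₀ else 0)
        - if (i : ℕ) = 1 then n * m₁ else 0 := by
    simp_rw [← pb.basis_repr_sub_zsmul_gen_pow x _ hdim₀,
      ← pb.basis_repr_sub_zsmul_gen_pow _ _ hdim, pb.basis.forall_dvd_repr_iff]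
    refine exists_congr fun y ↦ ?_
    simp only [zsmul_eq_mul, Int.cast_mul, Int.cast_pow]
    constructor <;> intro h <;> linear_combination h
  simp_rw [key]
  constructor
  · rintro ⟨m₀, m₁, h⟩ i
    split_ifs with hi
    · have hm₀ : n ∣ if (i : ℕ) = 0 then n * m₀ else 0 := by split_ifs <;> simp
      have hm₁ : n ∣ if (i : ℕ) = 1 then n * m₁ else 0 := by split_ifs <;> simp
      simpa using dvd_add (dvd_add ((dvd_pow_self n two_ne_zero).trans (h i)) hm₁) hm₀
    · simpa [show (i : ℕ) ≠ 0 by omega, show (i : ℕ) ≠ 1 by omega] using h i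
  · intro h
    have hc (j : Fin pb.dim) (hj : (j : ℕ) < 2) :
        n * (pb.basis.repr x j / n) = pb.basis.repr x j :=
      Int.mul_ediv_cancel' (by simpa [hj] using h j)
    refine ⟨pb.basis.repr x ⟨0, hdim₀⟩ / n, pb.basis.repr x ⟨1, hdim⟩ / n,
      fun i ↦ ?_⟩
    obtain hi | hi | hi : (i : ℕ) = 0 ∨ (i : ℕ) = 1 ∨ 2 ≤ (i : ℕ) := by omega
    · obtain rfl : i = ⟨0, hdim₀⟩ := Fin.ext hi
      simp [hc]
    · obtain rfl : i = ⟨1, hdim⟩ := Fin.ext hi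
      simp [hc]
    · simpa [show (i : ℕ) ≠ 0 by omega, show (i : ℕ) ≠ 1 by omega,
        show ¬(i : ℕ) < 2 by omega] using h i

end PowerBasis

section Order

variable {A : Type*} [CommRing A] {T : Subalgebra ℤ A} {R : Subring A} {α : A} {p : ℕ}
  (hR : ∀ x, x ∈ R ↔ ∃ m : ℤ, ∃ w ∈ T, x = m + p * w)
include hR

theorem toAddSubgroup_le_of_mem_iff :
    R.toAddSubgroup ≤ (Subalgebra.toSubmodule T).toAddSubgroup := by
  intro x hx
  obtain ⟨m, w, hw, rfl⟩ := (hR x).1 hx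
  show (m : A) + p * w ∈ T
  exact add_mem (intCast_mem T m) (mul_mem (natCast_mem T p) hw)

theorem natCast_mul_mem_of_mem_iff {w : A} (hw : w ∈ T) : (p : A) * w ∈ R :=
  (hR _).2 ⟨0, w, hw, by simp⟩

theorem mem_map_of_mem_iff_mul {M : Ideal R}
    (hM : ∀ y : R, y ∈ M ↔ ∃ w ∈ T, (y : A) = p * w) (x : A) :
    x ∈ M.toAddSubgroup.map R.toAddSubgroup.subtype ↔ ∃ w ∈ T, x = p * w :=
  Ideal.mem_map_subtype_iff (P := fun x ↦ ∃ w ∈ T, x = p * w) hM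
    (fun _ ⟨_, hw, hx⟩ ↦ hx ▸ natCast_mul_mem_of_mem_iff hR hw) x

variable {a b : R} (hα : α ∈ T) (ha : (a : A) = p) (hb : (b : A) = p * α)
include hα ha hb

theorem mem_span_pair_iff (y : R) :
    y ∈ Ideal.span {a, b} ↔
      ∃ m₀ m₁ : ℤ, ∃ w ∈ T, (y : A) = p * (m₀ + m₁ * α + p * w) := by
  rw [Ideal.mem_span_pair]
  constructor
  · rintro ⟨u, v, rfl⟩
    obtain ⟨m, w, hw, hu⟩ := (hR u).1 u.2
    obtain ⟨m', w', hw', hv⟩ := (hR v).1 v.2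
    refine ⟨m, m', w + α * w', add_mem hw (mul_mem hα hw'), ?_⟩
    push_cast [ha, hb, hu, hv]
    ring
  · rintro ⟨m₀, m₁, w, hw, hy⟩
    refine ⟨⟨m₀ + p * w, (hR _).2 ⟨m₀, w, hw, rfl⟩⟩, m₁, Subtype.ext ?_⟩
    push_cast [ha, hb, hy]
    ring

theorem mem_map_span_pair_iff (x : A) :
    x ∈ (Ideal.span {a, b}).toAddSubgroup.map R.toAddSubgroup.subtype ↔
      ∃ m₀ m₁ : ℤ, ∃ w ∈ T, x = p * (m₀ + m₁ * α + p * w) := by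
  refine Ideal.mem_map_subtype_iff
    (P := fun x ↦ ∃ m₀ m₁ : ℤ, ∃ w ∈ T, x = p * (m₀ + m₁ * α + p * w))
    (mem_span_pair_iff hR hα ha hb)
    (fun x ⟨m₀, m₁, w, hw, hx⟩ ↦ (hR x).2 ⟨p * m₀, m₁ * α + p * w, ?_, ?_⟩) x
  · exact add_mem (mul_mem (intCast_mem T m₁) hα) (mul_mem (natCast_mem T p) hw)
  · rw [hx]
    push_cast
    ring

variable {M : Ideal R} (hM : ∀ y : R, y ∈ M ↔ ∃ w ∈ T, (y : A) = p * w)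
include hM

theorem mem_span_pair_mul_iff (y : R) :
    y ∈ Ideal.span {a, b} * M ↔ ∃ w ∈ T, (y : A) = p ^ 2 * w := by
  have hIM : Ideal.span {a, b} ≤ M := by
    rw [Ideal.span_le, Set.pair_subset_iff]
    exact ⟨(hM a).2 ⟨1, T.one_mem, by rw [ha, mul_one]⟩, (hM b).2 ⟨α, hα, hb⟩⟩
  constructor
  · intro hy
    refine Submodule.mul_induction_on hy (fun u hu v hv ↦ ?_) fun u v ↦ ?_
    · obtain ⟨w, hw, hu⟩ := (hM u).1 (hIM hu)
      obtain ⟨w', hw', hv⟩ := (hM v).1 hv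
      exact ⟨w * w', mul_mem hw hw', by push_cast [hu, hv]; ring⟩
    · rintro ⟨w, hw, hu⟩ ⟨w', hw', hv⟩
      exact ⟨w + w', add_mem hw hw', by push_cast [hu, hv]; ring⟩
  · rintro ⟨w, hw, hy⟩
    have : y = a * ⟨p * w, natCast_mul_mem_of_mem_iff hR hw⟩ :=
      Subtype.ext (by push_cast [ha, hy]; ring)
    rw [this]
    exact Ideal.mul_mem_mul (Ideal.subset_span (Set.mem_insert _ _)) ((hM _).2 ⟨w, hw, rfl⟩)

theorem mem_map_span_pair_mul_iff (x : A) :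
    x ∈ (Ideal.span {a, b} * M).toAddSubgroup.map R.toAddSubgroup.subtype ↔
      ∃ w ∈ T, x = (p : A) ^ 2 * w := by
  refine Ideal.mem_map_subtype_iff (P := fun x ↦ ∃ w ∈ T, x = (p : A) ^ 2 * w)
    (mem_span_pair_mul_iff hR hα ha hb hM) (fun x ⟨w, hw, hx⟩ ↦ ?_) x
  rw [hx, sq, mul_assoc]
  exact natCast_mul_mem_of_mem_iff hR (mul_mem (natCast_mem T p) hw)

end Order

section Lattice

variable {A : Type*} [CommRing A] [IsDomain A] [CharZero A] {α : A} (hα : IsIntegral ℤ α)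
  (H : AddSubgroup A)
include hα

theorem relIndex_adjoin_of_mem_iff_mul (q : ℕ)
    (hH : ∀ x, x ∈ H ↔ ∃ w ∈ Algebra.adjoin ℤ {α}, x = q * w) :
    H.relIndex (Subalgebra.toSubmodule (Algebra.adjoin ℤ {α})).toAddSubgroup =
      q ^ (minpoly ℤ α).natDegree := by
  let pb := Algebra.adjoin.powerBasis' hα
  rw [AddSubgroup.relIndex_eq_prod_of_basis _ pb.basis (fun _ ↦ q) H, Finset.prod_const,
    Finset.card_univ, Fintype.card_fin, Algebra.adjoin.powerBasis'_dim]
  intro x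
  rw [hH, pb.basis.forall_dvd_repr_iff]
  constructor
  · rintro ⟨w, hw, hx⟩
    exact ⟨⟨w, hw⟩, Subtype.ext (by simp [hx])⟩
  · rintro ⟨y, rfl⟩
    exact ⟨y, y.2, by simp⟩

variable (hdim : (minpoly ℤ α).natDegree = 4)
include hdim

theorem relIndex_adjoin_of_mem_iff_intCast_add_mul (p : ℕ)
    (hH : ∀ x, x ∈ H ↔ ∃ m : ℤ, ∃ w ∈ Algebra.adjoin ℤ {α}, x = m + p * w) :
    H.relIndex (Subalgebra.toSubmodule (Algebra.adjoin ℤ {α})).toAddSubgroup = p ^ 3 := by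
  let pb := Algebra.adjoin.powerBasis' hα
  rw [AddSubgroup.relIndex_eq_prod_of_basis _ pb.basis
      (fun i : Fin pb.dim ↦ if (i : ℕ) = 0 then 1 else p) H,
    Fin.prod_univ_eq_prod_range (fun i : ℕ ↦ if i = 0 then 1 else p),
    Algebra.adjoin.powerBasis'_dim, hdim]
  · simp [Finset.prod_range_succ, pow_succ]
  intro x
  push_cast
  rw [hH, ← pb.exists_eq_intCast_add_smul_iff]
  constructor
  · rintro ⟨m, w, hw, hx⟩
    exact ⟨m, ⟨w, hw⟩, Subtype.ext (by simp [hx])⟩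
  · rintro ⟨m, y, rfl⟩
    exact ⟨m, y, y.2, by simp⟩

theorem relIndex_adjoin_of_mem_iff_mul_intCast_add (p : ℕ)
    (hH : ∀ x, x ∈ H ↔
      ∃ m₀ m₁ : ℤ, ∃ w ∈ Algebra.adjoin ℤ {α}, x = p * (m₀ + m₁ * α + p * w)) :
    H.relIndex (Subalgebra.toSubmodule (Algebra.adjoin ℤ {α})).toAddSubgroup = p ^ 6 := by
  let pb := Algebra.adjoin.powerBasis' hα
  have hdim' : 1 < pb.dim := by rw [Algebra.adjoin.powerBasis'_dim, hdim]; norm_num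
  rw [AddSubgroup.relIndex_eq_prod_of_basis _ pb.basis
      (fun i : Fin pb.dim ↦ if (i : ℕ) < 2 then p else p ^ 2) H,
    Fin.prod_univ_eq_prod_range (fun i : ℕ ↦ if i < 2 then p else p ^ 2),
    Algebra.adjoin.powerBasis'_dim, hdim]
  · simp [Finset.prod_range_succ, pow_succ, mul_assoc]
  intro x
  push_cast
  rw [hH, ← pb.exists_eq_smul_intCast_add_zsmul_gen_add_smul_iff hdim']
  constructor
  · rintro ⟨m₀, m₁, w, hw, hx⟩
    exact ⟨m₀, m₁, ⟨w, hw⟩, Subtype.ext (by simp [hx, pb, mul_add])⟩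
  · rintro ⟨m₀, m₁, y, rfl⟩
    exact ⟨m₀, m₁, y, y.2, by simp [pb, mul_add]⟩

end Lattice

/-- Let `α` be a root of a monic irreducible integer polynomial of degree `4`, `p` a prime,
`R = ℤ + pℤ[α]`, `I = pR + pαR`, and `M = pℤ[α]` (a maximal ideal of `R`). Then
`N(I)·N(M) = p⁴ < p⁵ = N(IM)`. -/
theorem stmt12 (α : ℂ) (f : Polynomial ℤ) (hmonic : f.Monic) (hirr : Irreducible f)
    (hdeg : f.natDegree = 4) (hroot : Polynomial.aeval α f = 0)
    (p : ℕ) (hp : p.Prime)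
    (R : Subring ℂ)
    (hR : (R : Set ℂ) = {x | ∃ m : ℤ, ∃ w ∈ Subring.closure {α}, x = m + p * w})
    (a b : ↥R) (ha : (a : ℂ) = p) (hb : (b : ℂ) = p * α)
    (M : Ideal ↥R)
    (hM : ∀ x : ↥R, x ∈ M ↔ ∃ w ∈ Subring.closure {α}, (x : ℂ) = p * w) :
    Nat.card (↥R ⧸ Ideal.span {a, b}) * Nat.card (↥R ⧸ M) = p ^ 4 ∧
    Nat.card (↥R ⧸ (Ideal.span {a, b} * M)) = p ^ 5 ∧
    (p : ℕ) ^ 4 < p ^ 5 := by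
  have hα : IsIntegral ℤ α := ⟨f, hmonic, hroot⟩
  have hdim : (minpoly ℤ α).natDegree = 4 := by
    rw [← IsIntegrallyClosed.eq_minpoly_of_irreducible_of_monic hirr hroot hmonic, hdeg]
  have hT (w : ℂ) : w ∈ Subring.closure {α} ↔ w ∈ Algebra.adjoin ℤ {α} := by
    rw [Algebra.adjoin_int]; rfl
  simp only [hT] at hR hM
  replace hR (x : ℂ) :
      x ∈ R ↔ ∃ m : ℤ, ∃ w ∈ Algebra.adjoin ℤ {α}, x = m + p * w :=
    Set.ext_iff.mp hR x
  have hαT := Algebra.self_mem_adjoin_singleton ℤ α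
  have card (J : Ideal R) : Nat.card (R ⧸ J) * p ^ 3 =
      (J.toAddSubgroup.map R.toAddSubgroup.subtype).relIndex
        (Subalgebra.toSubmodule (Algebra.adjoin ℤ {α})).toAddSubgroup := by
    rw [← relIndex_adjoin_of_mem_iff_intCast_add_mul hα R.toAddSubgroup hdim p hR]
    exact Subring.card_quotient_mul_relIndex R J _ (toAddSubgroup_le_of_mem_iff hR)
  have cardM : Nat.card (R ⧸ M) * p ^ 3 = p * p ^ 3 := by
    rw [card, relIndex_adjoin_of_mem_iff_mul hα _ p (mem_map_of_mem_iff_mul hR hM), hdim]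
    ring
  have cardI : Nat.card (R ⧸ Ideal.span {a, b}) * p ^ 3 = p ^ 3 * p ^ 3 := by
    rw [card, relIndex_adjoin_of_mem_iff_mul_intCast_add hα _ hdim p
      (mem_map_span_pair_iff hR hαT ha hb)]
    ring
  have cardIM : Nat.card (R ⧸ (Ideal.span {a, b} * M)) * p ^ 3 = p ^ 5 * p ^ 3 := by
    rw [card, relIndex_adjoin_of_mem_iff_mul hα _ (p ^ 2) fun x ↦ by
      push_cast; exact mem_map_span_pair_mul_iff hR hαT ha hb hM x, hdim]
    ring
  have hp3 : 0 < p ^ 3 := pow_pos hp.pos 3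
  rw [Nat.eq_of_mul_eq_mul_right hp3 cardI, Nat.eq_of_mul_eq_mul_right hp3 cardM,
    Nat.eq_of_mul_eq_mul_right hp3 cardIM]
  exact ⟨by ring, rfl, Nat.pow_lt_pow_right hp.one_lt (by norm_num)⟩
end

section
/- Let U, V, W be vector spaces over a field k with dim W ≥ 2, and let φ : U ⊗ V → W be a surjective linear map. Then there exists u ∈ U with dim φ(u ⊗ V) ≥ 2, or there exists v ∈ V with dim φ(U ⊗ v) ≥ 2. -/
open Cardinal

lemma aux_two_le_rank {k W : Type*} [Field k] [AddCommGroup W] [Module k W]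
    (p : Submodule k W) {x y : W} (hx : x ∈ p) (hy : y ∈ p)
    (h : LinearIndependent k ![x, y]) : 2 ≤ Module.rank k p := by
  have hli : LinearIndependent k ![(⟨x, hx⟩ : p), ⟨y, hy⟩] := by
    apply LinearIndependent.of_comp p.subtype
    convert h using 1
    ext i
    fin_cases i <;> rfl
  simpa using hli.cardinal_lift_le_rank

lemma aux_dep {k W : Type*} [Field k] [AddCommGroup W] [Module k W]
    (p : Submodule k W) (hp : ¬ 2 ≤ Module.rank k p) {x y : W}
    (hx : x ∈ p) (hy : y ∈ p) (hx0 : x ≠ 0) : ∃ a : k, a • x = y := by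
  by_contra h
  push_neg at h
  exact hp (aux_two_le_rank p hx hy ((LinearIndependent.pair_iff' hx0).2 h))

/-- Let `U`, `V`, `W` be `k`-vector spaces with `dim W ≥ 2` and `φ : U ⊗ V → W` a surjective
linear map. Then there is `u ∈ U` with `dim φ(u ⊗ V) ≥ 2` or `v ∈ V` with
`dim φ(U ⊗ v) ≥ 2`. -/
theorem stmt13 (k U V W : Type*) [Field k] [AddCommGroup U] [Module k U]
    [AddCommGroup V] [Module k V] [AddCommGroup W] [Module k W]
    (hW : 2 ≤ Module.rank k W)
    (φ : TensorProduct k U V →ₗ[k] W) (hφ : Function.Surjective φ) :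
    (∃ u : U, 2 ≤ Module.rank k
      (LinearMap.range (φ ∘ₗ TensorProduct.mk k U V u))) ∨
    (∃ v : V, 2 ≤ Module.rank k
      (LinearMap.range (φ ∘ₗ (TensorProduct.mk k U V).flip v))) := by
  by_contra hcon
  push_neg at hcon
  obtain ⟨hU, hV⟩ := hcon
  -- no single vector spans everything
  have hspan : ∀ w0 : W, ¬ (∀ u v, φ (u ⊗ₜ v) ∈ Submodule.span k {w0}) := by
    intro w0 hmem
    have hr : LinearMap.range φ ≤ Submodule.span k {w0} := by
      rw [LinearMap.range_eq_map, ← TensorProduct.span_tmul_eq_top, Submodule.map_span,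
        Submodule.span_le]
      rintro _ ⟨_, ⟨u, v, rfl⟩, rfl⟩
      exact hmem u v
    rw [LinearMap.range_eq_top.mpr hφ, top_le_iff] at hr
    have h1 : Module.rank k W ≤ 1 := by
      rw [← rank_top k W, ← hr]
      simpa using rank_span_le (R := k) ({w0} : Set W)
    exact absurd (hW.trans h1) (by norm_num)
  obtain ⟨u₁, v₁, hw₁⟩ : ∃ u v, φ (u ⊗ₜ v) ≠ 0 := by
    by_contra h
    push_neg at h
    exact hspan 0 (fun u v => by simp [h u v])
  set w₁ := φ (u₁ ⊗ₜ v₁) with hw₁def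
  obtain ⟨u₂, v₂, hw₂⟩ : ∃ u v, φ (u ⊗ₜ v) ∉ Submodule.span k {w₁} := by
    by_contra h
    push_neg at h
    exact hspan w₁ h
  set w₂ := φ (u₂ ⊗ₜ v₂) with hw₂def
  have hind : LinearIndependent k ![w₁, w₂] :=
    (LinearIndependent.pair_iff' hw₁).2 fun a ha =>
      hw₂ (ha ▸ Submodule.smul_mem _ a (Submodule.mem_span_singleton_self w₁))
  have hmemU : ∀ u v, φ (u ⊗ₜ v) ∈ LinearMap.range (φ ∘ₗ TensorProduct.mk k U V u) :=
    fun u v => ⟨v, rfl⟩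
  have hmemV : ∀ u v, φ (u ⊗ₜ v) ∈ LinearMap.range (φ ∘ₗ (TensorProduct.mk k U V).flip v) :=
    fun u v => ⟨u, rfl⟩
  have hw₂0 : w₂ ≠ 0 := fun h => hw₂ (h ▸ Submodule.zero_mem _)
  -- the "cross" terms vanish
  have hcross : ∀ x : W, (∃ a : k, a • w₁ = x) → (∃ b : k, b • w₂ = x) → x = 0 := by
    rintro x ⟨a, ha⟩ ⟨b, hb⟩
    have : a • w₁ + (-b) • w₂ = 0 := by rw [ha, neg_smul, hb]; exact add_neg_cancel x
    obtain ⟨h1, -⟩ := LinearIndependent.pair_iff.1 hind a (-b) this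
    rw [← ha, h1, zero_smul]
  have h12 : φ (u₁ ⊗ₜ v₂) = 0 :=
    hcross _ (aux_dep _ (not_le.2 (hU u₁)) (hmemU u₁ v₁) (hmemU u₁ v₂) hw₁)
      (aux_dep _ (not_le.2 (hV v₂)) (hmemV u₂ v₂) (hmemV u₁ v₂) hw₂0)
  have h21 : φ (u₂ ⊗ₜ v₁) = 0 :=
    hcross _ (aux_dep _ (not_le.2 (hV v₁)) (hmemV u₁ v₁) (hmemV u₂ v₁) hw₁)
      (aux_dep _ (not_le.2 (hU u₂)) (hmemU u₂ v₂) (hmemU u₂ v₁) hw₂0)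
  have e1 : φ ((u₁ + u₂) ⊗ₜ v₁) = w₁ := by
    rw [TensorProduct.add_tmul, map_add, h21, add_zero]
  have e2 : φ ((u₁ + u₂) ⊗ₜ v₂) = w₂ := by
    rw [TensorProduct.add_tmul, map_add, h12, zero_add]
  exact absurd (aux_two_le_rank _ (e1 ▸ hmemU (u₁ + u₂) v₁)
    (e2 ▸ hmemU (u₁ + u₂) v₂) hind) (not_le.2 (hU (u₁ + u₂)))
end

section
/- Let V be a finite-dimensional vector space over a finite field k. If V is the union of n proper subspaces V₁, ..., Vₙ, then n > #k. -/
/-!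
A proper subspace of `V` has index at least `q = #k`, so it contains at most `|V| / q` vectors.
Hence `n ≤ q` proper subspaces contain at most `q (|V| / q - 1) = |V| - q < |V| - 1` nonzero
vectors between them, too few to cover `V`.
-/

theorem Submodule.card_mul_card_le_card_of_ne_top {K M : Type*} [DivisionRing K]
    [AddCommGroup M] [Module K M] [Finite M] {p : Submodule K M} (hp : p ≠ ⊤) :
    Nat.card K * Nat.card p ≤ Nat.card M := by
  have : Finite (M ⧸ p) := Finite.of_surjective _ p.mkQ_surjective
  have : Nontrivial (M ⧸ p) := Submodule.Quotient.nontrivial_iff.mpr hp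
  obtain ⟨x, hx⟩ := exists_ne (0 : M ⧸ p)
  rw [p.card_eq_card_quotient_mul_card, mul_comm]
  exact Nat.mul_le_mul_left _ (Nat.card_le_card_of_injective _ (smul_left_injective K hx))

theorem Set.card_sub_one_le_sum_ncard_sub_one {α ι : Type*} [Finite α] [Fintype ι] {a : α}
    {s : ι → Set α} (ha : ∀ i, a ∈ s i) (hcover : ⋃ i, s i = univ) :
    Nat.card α - 1 ≤ ∑ i, ((s i).ncard - 1) := by
  have hcompl : ({a}ᶜ : Set α) = ⋃ i, (s i \ {a}) := by
    rw [← iUnion_sdiff, hcover, compl_eq_univ_sdiff]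
  calc Nat.card α - 1 = ({a}ᶜ : Set α).ncard := by rw [ncard_compl, ncard_singleton]
    _ ≤ ∑ i, (s i \ {a}).ncard := hcompl ▸ ncard_iUnion_le_of_fintype _
    _ = ∑ i, ((s i).ncard - 1) := by simp only [ncard_sdiff_singleton_of_mem (ha _)]

/-- A finite-dimensional vector space over a finite field `k` which is the union of `n`
proper subspaces satisfies `n > #k`. -/
theorem stmt14 (k V : Type*) [Field k] [Finite k] [AddCommGroup V] [Module k V]
    [FiniteDimensional k V] (n : ℕ) (S : Fin n → Submodule k V)
    (hproper : ∀ i, S i ≠ ⊤) (hcover : ∀ x : V, ∃ i, x ∈ S i) :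
    Nat.card k < n := by
  have : Finite V := Module.finite_of_finite k
  by_contra! hn
  obtain ⟨i₀, -⟩ := hcover 0
  set q := Nat.card k
  set N := Nat.card V
  have hq : 1 < q := Finite.one_lt_card
  have hsub (i) : q * Nat.card (S i) ≤ N := Submodule.card_mul_card_le_card_of_ne_top (hproper i)
  have hqN : q ≤ N := le_of_mul_le_of_one_le_left (hsub i₀) Nat.card_pos
  have hcount : N - 1 ≤ ∑ i, (Nat.card (S i) - 1) :=
    Set.card_sub_one_le_sum_ncard_sub_one (fun i => (S i).zero_mem)
      (Set.eq_univ_of_forall fun x => Set.mem_iUnion.mpr (hcover x))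
  have hsum : q * ∑ i, (Nat.card (S i) - 1) ≤ q * (N - q) :=
    calc q * ∑ i, (Nat.card (S i) - 1)
        = ∑ i, q * (Nat.card (S i) - 1) := Finset.mul_sum ..
      _ ≤ ∑ _i : Fin n, (N - q) := Finset.sum_le_sum fun i _ => by
          rw [Nat.mul_sub_one]; have := hsub i; omega
      _ = n * (N - q) := by simp
      _ ≤ q * (N - q) := Nat.mul_le_mul_right _ hn
  have hle : ∑ i, (Nat.card (S i) - 1) ≤ N - q := Nat.le_of_mul_le_mul_left hsum (by omega)
  omega
end

section
/- Let R be a local number ring with maximal ideal 𝔪, residue field k, and normalization R̃ having l distinct maximal ideals. If l ≤ #k, then for every ideal I of R there exists x ∈ I with I·R̃ = x·R̃. -/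
/-!
Let `F = Frac R`, a number field. Every ideal `J` of a ring `B` with `𝓞 F ⊆ B ⊆ F` is extended
from `J ∩ 𝓞 F`, so `B` inherits noetherianity and dimension one from `𝓞 F`; hence `R̃` is a
Dedekind domain, and it is semilocal because its maximal ideals all lie over `𝔪`.
Put `J = I R̃`. For each maximal ideal `M` of `R̃` the ideal `MJ ∩ R` does not contain `I`, since
`MJ ≠ J`. A pigeonhole argument over the lines `v + r w`, `r` running through lifts of `k`, shows
that `I` is not covered by at most `#k` such ideals. An element `x ∈ I` outside all of them has
`x R̃ = J L` with `L` in no maximal ideal, so `x R̃ = J`.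
-/

open scoped nonZeroDivisors

theorem NumberField.of_ringHom {F K : Type*} [Field F] [Field K] [NumberField K] (f : F →+* K) :
    NumberField F :=
  have := f.charZero
  { to_finiteDimensional := .of_injective f.toRatAlgHom.toLinearMap f.injective }

section Overring

variable (A : Type*) {B F : Type*} [CommRing A] [IsDedekindDomain A] [CommRing B] [Field F]
  [Algebra A B] [Algebra A F] [Algebra B F] [IsScalarTower A B F] [IsFractionRing A F]

include A

theorem Ideal.map_comap_eq_of_overring (hB : Function.Injective (algebraMap B F))
    (J : Ideal B) : (J.comap (algebraMap A B)).map (algebraMap A B) = J := by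
  refine le_antisymm Ideal.map_comap_le fun x hx => ?_
  set y := algebraMap B F x
  -- `D = A + A y` is invertible and `D⁻¹ ⊆ A`, so `y = y * 1 ∈ y D⁻¹ D ⊆ (J ∩ A) B`.
  set D : FractionalIdeal A⁰ F := FractionalIdeal.spanSingleton A⁰ y + 1
  have hD : 1 ≤ D := le_add_self
  have hD0 : D ≠ 0 := ne_bot_of_le_ne_bot one_ne_zero hD
  have hyD : y ∈ D := (le_add_right le_rfl : _ ≤ D) (FractionalIdeal.mem_spanSingleton_self _ _)
  have hD_B : (D : Submodule A F) ≤ (IsScalarTower.toAlgHom A B F).range.toSubmodule := by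
    rw [FractionalIdeal.coe_add, FractionalIdeal.coe_spanSingleton, FractionalIdeal.coe_one,
      Submodule.add_eq_sup, sup_le_iff, Submodule.span_le, Set.singleton_subset_iff,
      Submodule.one_le]
    exact ⟨⟨x, rfl⟩, Subalgebra.one_mem _⟩
  have hDinv : D⁻¹ ≤ 1 := by
    simpa using
      FractionalIdeal.inv_anti_mono (one_ne_zero : (1 : FractionalIdeal A⁰ F) ≠ 0) hD0 hD
  set P := (J.comap (algebraMap A B)).map (algebraMap A B)
  have key : ((D⁻¹ : FractionalIdeal A⁰ F) : Submodule A F) * D ≤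
      ((IsLocalization.coeSubmodule F P).restrictScalars A).comap (LinearMap.mulLeft A y) := by
    refine Submodule.mul_le.2 fun t ht d hd => ?_
    obtain ⟨a, rfl⟩ := (FractionalIdeal.mem_one_iff _).1 (hDinv ht)
    obtain ⟨a', ha'⟩ := (FractionalIdeal.mem_one_iff _).1
      (mul_inv_cancel₀ hD0 ▸ FractionalIdeal.mul_mem_mul hyD ht)
    obtain ⟨b, rfl⟩ := hD_B hd
    have ha'J : algebraMap A B a' ∈ J := by
      have : algebraMap A B a' = algebraMap A B a * x := hB <| by
        rw [← IsScalarTower.algebraMap_apply, map_mul, ← IsScalarTower.algebraMap_apply, ha',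
          mul_comm]
      rw [this]
      exact J.mul_mem_left _ hx
    refine (IsLocalization.mem_coeSubmodule _ _).2
      ⟨_, P.mul_mem_right b (Ideal.mem_map_of_mem _ ha'J), ?_⟩
    simp [map_mul, ← IsScalarTower.algebraMap_apply, ha', mul_assoc]
  have h1 : (1 : F) ∈ ((D⁻¹ : FractionalIdeal A⁰ F) : Submodule A F) * D := by
    rw [← FractionalIdeal.coe_mul, inv_mul_cancel₀ hD0]
    exact FractionalIdeal.one_mem_one _
  obtain ⟨p, hp, hpy⟩ := by simpa using key h1
  exact hB hpy ▸ hp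

theorem Ideal.comap_injective_of_overring (hB : Function.Injective (algebraMap B F)) :
    Function.Injective (Ideal.comap (algebraMap A B)) :=
  Function.LeftInverse.injective (Ideal.map_comap_eq_of_overring A hB)

theorem isNoetherianRing_of_overring (hB : Function.Injective (algebraMap B F)) :
    IsNoetherianRing B :=
  isNoetherianRing_iff.2 ⟨fun J => Ideal.map_comap_eq_of_overring A hB J ▸
    Ideal.FG.map (IsNoetherian.noetherian _) _⟩

theorem dimensionLEOne_of_overring (hB : Function.Injective (algebraMap B F)) :
    Ring.DimensionLEOne B where
  maximalOfPrime {P} hP0 hP := by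
    obtain ⟨M, hM, hPM⟩ := P.exists_le_maximal hP.ne_top
    have hP0' : P.comap (algebraMap A B) ≠ ⊥ := fun h =>
      hP0 (by rw [← Ideal.map_comap_eq_of_overring A hB P, h, Ideal.map_bot])
    have hPmax : (P.comap (algebraMap A B)).IsMaximal := (hP.comap _).isMaximal hP0'
    rwa [Ideal.comap_injective_of_overring A hB
      (hPmax.eq_of_le (Ideal.comap_ne_top _ hM.ne_top) (Ideal.comap_mono hPM))]

theorem isDedekindDomain_of_overring [IsDomain B] [IsIntegrallyClosed B]
    (hB : Function.Injective (algebraMap B F)) : IsDedekindDomain B :=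
  have := isNoetherianRing_of_overring A hB
  have := dimensionLEOne_of_overring A hB
  {}

end Overring

open NumberField in
theorem isDedekindDomain_integralClosure {R F : Type*} [CommRing R] [IsDomain R] [Field F]
    [NumberField F] [Algebra R F] [IsFractionRing R F] :
    IsDedekindDomain (integralClosure R F) := by
  let _ : Algebra (𝓞 F) (integralClosure R F) :=
    ((algebraMap (𝓞 F) F).codRestrict (integralClosure R F)
      fun a => (RingOfIntegers.isIntegral_coe a).tower_top).toAlgebra
  have : IsScalarTower (𝓞 F) (integralClosure R F) F := .of_algebraMap_eq fun _ => rfl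
  have := integralClosure.isIntegrallyClosedOfFiniteExtension (R := R) F (L := F)
  exact isDedekindDomain_of_overring (𝓞 F) Subtype.val_injective

section Dedekind

variable {B : Type*} [CommRing B] [IsDedekindDomain B]

theorem finite_maximalSpectrum_of_forall_mem {y : B} (hy : y ≠ 0)
    (h : ∀ M : MaximalSpectrum B, y ∈ M.asIdeal) : Finite (MaximalSpectrum B) := by
  have hfin := Ideal.finite_factors (I := Ideal.span {y}) (by simpa using hy)
  let e : MaximalSpectrum B → IsDedekindDomain.HeightOneSpectrum B := fun M =>
    ⟨M.asIdeal, M.isMaximal.isPrime, fun h0 => hy (by simpa [h0] using h M)⟩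
  have he : Function.Injective e := fun M N hMN => by
    ext1
    exact congrArg IsDedekindDomain.HeightOneSpectrum.asIdeal hMN
  refine Set.finite_univ_iff.1 ((hfin.preimage he.injOn).subset fun M _ => ?_)
  exact Ideal.dvd_span_singleton.2 (h M)

theorem IsLocalRing.finite_maximalSpectrum_of_isIntegral {R : Type*} [CommRing R] [IsLocalRing R]
    [Algebra R B] [Algebra.IsIntegral R B] (hinj : Function.Injective (algebraMap R B))
    (hm : IsLocalRing.maximalIdeal R ≠ ⊥) : Finite (MaximalSpectrum B) := by
  obtain ⟨y, hy, hy0⟩ := Submodule.exists_mem_ne_zero_of_ne_bot hm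
  refine finite_maximalSpectrum_of_forall_mem ((map_ne_zero_iff _ hinj).2 hy0) fun M => ?_
  have := M.isMaximal
  rwa [← Ideal.mem_comap,
    IsLocalRing.eq_maximalIdeal (Ideal.isMaximal_comap_of_isIntegral_of_isMaximal M.asIdeal)]

theorem Ideal.not_le_mul_of_ne_bot {J M : Ideal B} (hJ : J ≠ ⊥) (hM : M ≠ ⊤) :
    ¬ J ≤ M * J := fun h =>
  hM (mul_right_cancel₀ hJ ((le_antisymm Ideal.mul_le_right h).trans (Ideal.top_mul J).symm))

theorem Ideal.eq_span_singleton_of_forall_notMem_mul {J : Ideal B} {x : B} (hx : x ∈ J)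
    (h : ∀ M : Ideal B, M.IsMaximal → x ∉ M * J) : J = Ideal.span {x} := by
  obtain ⟨L, hL⟩ := Ideal.dvd_span_singleton.2 hx
  obtain rfl | hL1 := eq_or_ne L ⊤
  · rw [hL, Ideal.mul_top]
  obtain ⟨M, hM, hLM⟩ := L.exists_le_maximal hL1
  refine absurd ?_ (h M hM)
  rw [mul_comm]
  exact Ideal.mul_mono_right hLM (hL ▸ Ideal.mem_span_singleton_self x)

end Dedekind

namespace IsLocalRing

variable {R : Type*} [CommRing R] [IsLocalRing R]

theorem exists_add_mul_notMem_of_card_lt (t : Finset (Ideal R))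
    (ht : t.card < Nat.card (R ⧸ maximalIdeal R)) (v : R) {w : R} (hw : ∀ W ∈ t, w ∉ W) :
    ∃ r : R, ∀ W ∈ t, v + r * w ∉ W := by
  by_contra! h
  choose f hft hf using fun c : R ⧸ maximalIdeal R => h (Quotient.out c)
  have hinj : Function.Injective fun c => (⟨f c, hft c⟩ : t) := by
    intro c₁ c₂ hc
    by_contra hne
    have hunit : IsUnit (Quotient.out c₁ - Quotient.out c₂) := by
      rwa [← notMem_maximalIdeal, ← Ideal.Quotient.eq, Ideal.Quotient.mk_out,
        Ideal.Quotient.mk_out]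
    have hc' : f c₁ = f c₂ := congrArg Subtype.val hc
    have hmem : (Quotient.out c₁ - Quotient.out c₂) * w ∈ f c₂ := by
      rw [sub_mul, ← add_sub_add_left_eq_sub _ _ v]
      exact (f c₂).sub_mem (hc' ▸ hf c₁) (hf c₂)
    exact hw _ (hft c₂) ((Ideal.unit_mul_mem_iff_mem _ hunit).1 hmem)
  exact ht.not_ge (by simpa using Nat.card_le_card_of_injective _ hinj)

theorem exists_mem_forall_notMem_of_card_le {I : Ideal R} (s : Finset (Ideal R))
    (hs : s.card ≤ Nat.card (R ⧸ maximalIdeal R)) (hI : ∀ W ∈ s, ¬ I ≤ W) :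
    ∃ x ∈ I, ∀ W ∈ s, x ∉ W := by
  classical
  induction s using Finset.induction_on with
  | empty => exact ⟨0, I.zero_mem, by simp⟩
  | insert W₀ t hW₀ ih =>
    rw [Finset.card_insert_of_notMem hW₀] at hs
    simp only [Finset.mem_insert, forall_eq_or_imp] at hI ⊢
    obtain ⟨w, hwI, hw⟩ := ih (by omega) hI.2
    by_cases hwW₀ : w ∈ W₀
    · obtain ⟨v, hvI, hvW₀⟩ := SetLike.not_le_iff_exists.1 hI.1
      obtain ⟨r, hr⟩ := exists_add_mul_notMem_of_card_lt t (by omega) v hw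
      refine ⟨v + r * w, I.add_mem hvI (I.mul_mem_left r hwI), fun h => hvW₀ ?_, hr⟩
      simpa using W₀.sub_mem h (W₀.mul_mem_left r hwW₀)
    · exact ⟨w, hwI, hwW₀, hw⟩

end IsLocalRing

/-- Let `R` be a local number ring with maximal ideal `𝔪`, finite residue field `k`, and
normalization `R̃` having `l` distinct maximal ideals. If `l ≤ #k`, then for every ideal
`I` of `R` there exists `x ∈ I` with `I·R̃ = x·R̃`. -/
theorem stmt16 (K : Type*) [Field K] [NumberField K] (R : Subring K) [IsLocalRing ↥R]
    (l : ℕ)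
    (hl : Nat.card (MaximalSpectrum ↥(integralClosure ↥R (FractionRing ↥R))) = l)
    (hcard : l ≤ Nat.card (↥R ⧸ IsLocalRing.maximalIdeal ↥R))
    (I : Ideal ↥R) :
    ∃ x ∈ I,
      Ideal.map (algebraMap ↥R ↥(integralClosure ↥R (FractionRing ↥R))) I =
        Ideal.span {algebraMap ↥R ↥(integralClosure ↥R (FractionRing ↥R)) x} := by
  classical
  set B := integralClosure R (FractionRing R)
  obtain rfl | hI0 := eq_or_ne I ⊥
  · exact ⟨0, Submodule.zero_mem _, by simp⟩
  obtain rfl | hI1 := eq_or_ne I ⊤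
  · exact ⟨1, Submodule.mem_top, by simp [Ideal.map_top]⟩
  have : NumberField (FractionRing R) :=
    .of_ringHom (IsFractionRing.lift (g := R.subtype) Subtype.val_injective)
  have := isDedekindDomain_integralClosure (R := R) (F := FractionRing R)
  have hinj : Function.Injective (algebraMap R B) :=
    fun a b h => IsFractionRing.injective R (FractionRing R) (congrArg Subtype.val h)
  have := IsLocalRing.finite_maximalSpectrum_of_isIntegral hinj
    (ne_bot_of_le_ne_bot hI0 (IsLocalRing.le_maximalIdeal hI1))
  set J := I.map (algebraMap R B)
  have hJ0 : J ≠ ⊥ := (Ideal.map_eq_bot_iff_of_injective hinj).not.2 hI0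
  have := Fintype.ofFinite (MaximalSpectrum B)
  let W : MaximalSpectrum B → Ideal R := fun M => (M.asIdeal * J).comap (algebraMap R B)
  obtain ⟨x, hxI, hx⟩ := IsLocalRing.exists_mem_forall_notMem_of_card_le (Finset.univ.image W)
    (Finset.card_image_le.trans (by simpa [Nat.card_eq_fintype_card] using hl.trans_le hcard))
    (by simpa [W, ← Ideal.map_le_iff_le_comap] using
      fun M => Ideal.not_le_mul_of_ne_bot hJ0 M.isMaximal.ne_top)
  exact ⟨x, hxI, Ideal.eq_span_singleton_of_forall_notMem_mul (Ideal.mem_map_of_mem _ hxI)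
    fun M hM => by simpa [W] using hx (W ⟨M, hM⟩) (by simp)⟩
end

section
/- Let k be a field and A a (possibly noncommutative) unital k-algebra with dim_k A ≥ 4. If for all x, y ∈ A one has dim_k(k·1 + kx + ky + kxy) ≤ 3, then either A = k ⊕ V with V·V = 0 for some subspace V, or A is isomorphic to the algebra of upper-triangular matrices [[k, V],[0, k]] for some k-vector space V. -/
/-!
For `x ∉ k·1` and `y ∉ span {1, x}` the rank condition makes `1, x, y, xy` dependent, so
`xy ∈ span {1, x, y}`; using `dim A ≥ 4` this extends to all `x, y`. Hence left multiplication
by `x` acts on `A ⧸ span {1, x}` as a scalar `Λ x`, which is linear in `x`; right multiplication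
gives `ρ` in the same way, and comparing the two yields `xy = Λ(x) y + ρ(y) x + c · 1`.
On `V = ker Λ ∩ ker ρ` all products are therefore multiples of `1`, and associativity
`(uv)w = u(vw)` with `u, w` independent makes them vanish. If `Λ = ρ`, then `A = k·1 ⊕ V`.
Otherwise some `q` has `Λ q = 1`, `ρ q = 0`; associativity shows that `q` is an idempotent with
`qv = v` and `vq = 0` on `V`, and `1 - q`, `q` give the triangular decomposition.
-/

open Submodule

section LinearAlgebra

variable {k M : Type*} [Field k] [AddCommGroup M] [Module k M]

theorem span_triple_eq_sup (a b c : M) : span k {a, b, c} = span k {a, b} ⊔ k ∙ c := by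
  rw [span_insert, span_insert, span_insert, sup_assoc]

theorem smul_eq_of_sub_smul_mem {U : Submodule k M} {y z : M} {a b : k} (hy : y ∉ U)
    (ha : z - a • y ∈ U) (hb : z - b • y ∈ U) : a = b := by
  by_contra hab
  refine hy ((smul_mem_iff U (sub_ne_zero.2 (Ne.symm hab))).1 ?_)
  convert sub_mem ha hb using 1
  module

theorem mem_of_mem_sup_span_singleton_of_mem_sup_span_singleton {U : Submodule k M}
    {x y z : M} (hx : z ∈ U ⊔ k ∙ x) (hy : z ∈ U ⊔ k ∙ y) (hyx : y ∉ U ⊔ k ∙ x) : z ∈ U := by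
  obtain ⟨u, hu, w, hw, rfl⟩ := mem_sup.1 hy
  obtain ⟨b, rfl⟩ := mem_span_singleton.1 hw
  rcases eq_or_ne b 0 with rfl | hb
  · simpa using hu
  · refine absurd ((smul_mem_iff _ hb).1 ?_) hyx
    simpa using sub_mem hx (mem_sup_left hu)

theorem mem_span_of_rank_span_le_three {a b c d : M} (ha : a ≠ 0) (hb : b ∉ k ∙ a)
    (hc : c ∉ span k {a, b}) (hr : Module.rank k (span k {a, b, c, d}) ≤ 3) :
    d ∈ span k {a, b, c} := by
  by_contra hd
  have hli : LinearIndependent k ![d, c, b, a] := by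
    refine linearIndependent_finCons.2 ⟨linearIndependent_finCons.2
      ⟨linearIndependent_finCons.2 ⟨linearIndependent_unique_iff.2 ha, ?_⟩, ?_⟩, ?_⟩
    · simpa using hb
    · simpa [Set.pair_comm] using hc
    · convert hd using 3
      ext; simp
  have hrange : Set.range ![d, c, b, a] = {a, b, c, d} := by ext; simp
  have hcard := Cardinal.mk_range_eq_of_injective hli.injective
  rw [← rank_span hli, hrange] at hcard
  simp only [Cardinal.lift_id', Cardinal.mk_fin, Cardinal.lift_natCast] at hcard
  norm_num [hcard] at hr

theorem exists_notMem_span_triple (hM : 4 ≤ Module.rank k M) (a b c : M) :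
    ∃ v, v ∉ span k {a, b, c} := by
  classical
  by_contra! hspan
  have htop : span k {a, b, c} = ⊤ := eq_top_iff'.2 hspan
  have := rank_span_finset_le (R := k) ({a, b, c} : Finset M)
  rw [Finset.coe_insert, Finset.coe_insert, Finset.coe_singleton, htop, rank_top] at this
  have := hM.trans (this.trans (Nat.cast_le.2 Finset.card_le_three))
  norm_num at this

theorem exists_mem_ker_inf_ker_notMem_span_singleton (hM : 4 ≤ Module.rank k M)
    (f g : M →ₗ[k] k) (w : M) : ∃ u ∈ LinearMap.ker f ⊓ LinearMap.ker g, u ∉ k ∙ w := by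
  by_contra! hker
  have hrange : Module.rank k (LinearMap.range (f.prod g)) ≤ 2 := by
    simpa [rank_prod', one_add_one_eq_two] using (LinearMap.range (f.prod g)).rank_le
  have hker' : Module.rank k (LinearMap.ker (f.prod g)) ≤ 1 := by
    rw [LinearMap.ker_prod]
    exact (Submodule.rank_mono (fun u hu => hker u hu)).trans
      ((rank_span_le _).trans (by simp))
  have hsum := (f.prod g).lift_rank_range_add_rank_ker
  have := (Cardinal.lift_le.2 hM).trans (hsum.symm.le.trans
    (add_le_add (Cardinal.lift_le.2 hrange) (Cardinal.lift_le.2 hker')))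
  norm_num at this

theorem exists_apply_eq_one_apply_eq_zero {Λ ρ : M →ₗ[k] k} {o : M} (hΛρ : Λ ≠ ρ)
    (hΛo : Λ o = 1) (hρo : ρ o = 1) : ∃ q, Λ q = 1 ∧ ρ q = 0 := by
  obtain ⟨z, hz⟩ := DFunLike.ne_iff.1 hΛρ
  have hz' : Λ z - ρ z ≠ 0 := sub_ne_zero.2 hz
  refine ⟨(Λ z - ρ z)⁻¹ • (z - ρ z • o), ?_, ?_⟩
  · simp [hΛo, hz']
  · simp [hρo]

theorem isCompl_span_singleton_ker {Λ : M →ₗ[k] k} {x : M} (hx : Λ x ≠ 0) :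
    IsCompl (k ∙ x) (LinearMap.ker Λ) :=
  (isCompl_span_singleton_of_isCoatom_of_notMem
    (LinearMap.isCoatom_ker_of_surjective fun c => ⟨(c / Λ x) • x, by simp [hx]⟩) hx).symm

theorem span_sup_span_sup_ker_inf_ker_decomposition {Λ ρ : M →ₗ[k] k} {p q : M}
    (hp : Λ p = 0) (hp' : ρ p = 1) (hq : Λ q = 1) (hq' : ρ q = 0) :
    k ∙ p ⊔ k ∙ q ⊔ (LinearMap.ker Λ ⊓ LinearMap.ker ρ) = ⊤ ∧
      k ∙ p ⊓ (k ∙ q ⊔ (LinearMap.ker Λ ⊓ LinearMap.ker ρ)) = ⊥ ∧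
      k ∙ q ⊓ (k ∙ p ⊔ (LinearMap.ker Λ ⊓ LinearMap.ker ρ)) = ⊥ ∧
      (LinearMap.ker Λ ⊓ LinearMap.ker ρ) ⊓ (k ∙ p ⊔ k ∙ q) = ⊥ := by
  set V := LinearMap.ker Λ ⊓ LinearMap.ker ρ
  have hpV : Disjoint (k ∙ p) (k ∙ q ⊔ V) := by
    refine (disjoint_span_singleton_of_notMem fun hmem => ?_).symm
    have : k ∙ q ⊔ V ≤ LinearMap.ker ρ :=
      sup_le ((span_singleton_le_iff_mem _ _).2 hq') inf_le_right
    simpa [hp'] using this hmem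
  have hqV : Disjoint (k ∙ q) (V ⊔ k ∙ p) := by
    refine (disjoint_span_singleton_of_notMem fun hmem => ?_).symm
    have : V ⊔ k ∙ p ≤ LinearMap.ker Λ :=
      sup_le inf_le_left ((span_singleton_le_iff_mem _ _).2 hp)
    simpa [hq] using this hmem
  refine ⟨eq_top_iff'.2 fun x => ?_, hpV.eq_bot, by rw [sup_comm]; exact hqV.eq_bot,
    (disjoint_sup_right_of_disjoint_sup_right hpV hqV).eq_bot⟩
  have hx : x - ρ x • p - Λ x • q ∈ V := by
    constructor <;> simp [hp, hp', hq, hq']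
  convert add_mem (add_mem
    (mem_sup_left (mem_sup_left (smul_mem _ (ρ x) (mem_span_singleton_self p))))
    (mem_sup_left (mem_sup_right (smul_mem _ (Λ x) (mem_span_singleton_self q)))))
    (mem_sup_right hx) using 1
  abel

end LinearAlgebra

section Algebra

variable {k A : Type*} [Field k] [Ring A] [Algebra k A]

theorem mul_mem_span_of_rank_le {x y : A} (hr : Module.rank k (span k {1, x, y, x * y}) ≤ 3)
    (hx : x ∉ k ∙ 1) (hy : y ∉ span k {1, x}) : x * y ∈ span k {1, x, y} :=
  mem_span_of_rank_span_le_three (fun h1 => hx (by simpa [h1] using (mul_one x).symm)) hx hy hr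

section RankCondition

variable (hA : 4 ≤ Module.rank k A)
  (h : ∀ x y : A, Module.rank k (span k {1, x, y, x * y}) ≤ 3)
include h

theorem mul_self_mem_span_sup (x : A) {w : A} (hx : x ∉ k ∙ 1) (hw : w ∉ span k {1, x}) :
    x * x ∈ span k {1, x} ⊔ k ∙ w := by
  have hxw : x + w ∉ span k {1, x} := fun hmem =>
    hw (by simpa using sub_mem hmem (subset_span (by simp) : x ∈ span k {1, x}))
  have hle : span k {1, x, x + w} ≤ span k {1, x, w} := by
    refine span_le.2 ?_
    rintro _ (rfl | rfl | rfl)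
    exacts [subset_span (by simp), subset_span (by simp),
      add_mem (subset_span (by simp)) (subset_span (by simp))]
  rw [← span_triple_eq_sup, show x * x = x * (x + w) - x * w by noncomm_ring]
  exact sub_mem (hle (mul_mem_span_of_rank_le (h x _) hx hxw))
    (mul_mem_span_of_rank_le (h x w) hx hw)

include hA

theorem mul_self_mem_span (x : A) : x * x ∈ span k {1, x} := by
  by_cases hx : x ∈ k ∙ 1
  · obtain ⟨c, rfl⟩ := mem_span_singleton.1 hx
    rw [smul_one_mul]
    exact smul_mem _ c (subset_span (by simp))
  obtain ⟨w, hw⟩ := exists_notMem_span_triple hA 1 x x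
  obtain ⟨w', hw'⟩ := exists_notMem_span_triple hA 1 x w
  rw [Set.pair_eq_singleton] at hw
  rw [span_triple_eq_sup] at hw'
  exact mem_of_mem_sup_span_singleton_of_mem_sup_span_singleton
    (mul_self_mem_span_sup h x hx hw)
    (mul_self_mem_span_sup h x hx fun hmem => hw' (mem_sup_left hmem)) hw'

theorem mul_mem_span (x y : A) : x * y ∈ span k {1, x, y} := by
  by_cases hx : x ∈ k ∙ 1
  · obtain ⟨c, rfl⟩ := mem_span_singleton.1 hx
    rw [smul_one_mul]
    exact smul_mem _ c (subset_span (by simp))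
  by_cases hy : y ∈ span k {1, x}
  · refine span_mono (Set.insert_subset_insert
      (Set.singleton_subset_iff.2 (Set.mem_insert _ _))) ?_
    obtain ⟨a, b, rfl⟩ := mem_span_pair.1 hy
    rw [mul_add, mul_smul_one, mul_smul_comm]
    exact add_mem (smul_mem _ a (subset_span (by simp)))
      (smul_mem _ b (mul_self_mem_span hA h x))
  exact mul_mem_span_of_rank_le (h x y) hx hy

end RankCondition

theorem exists_forall_sub_smul_mem_span (m : A →ₗ[k] A →ₗ[k] A)
    (hm : ∀ x y, m x y ∈ span k {1, x, y}) (x : A) :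
    ∃ c : k, ∀ y, m x y - c • y ∈ span k {1, x} := by
  set U := span k {(1 : A), x}
  have h1 : (1 : A) ∈ U := subset_span (by simp)
  have hx : x ∈ U := subset_span (by simp)
  have hU : U ≤ U.comap (m x) := by
    refine span_le.2 fun z hz => ?_
    have hsub : span k {1, x, z} ≤ U := by
      rw [span_le, Set.insert_subset_iff, Set.insert_subset_iff, Set.singleton_subset_iff]
      exact ⟨h1, hx, by rcases hz with rfl | rfl <;> assumption⟩
    exact hsub (hm x z)
  obtain ⟨c, hc⟩ := LinearMap.exists_eq_smul_id_of_forall_notLinearIndependent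
    (f := U.mapQ U (m x) hU) (by
      intro q
      induction q using Submodule.Quotient.induction_on with | H y => ?_
      obtain ⟨a, b, c, hc⟩ := mem_span_triple.1 (hm x y)
      rw [LinearIndependent.pair_iff]
      push Not
      refine ⟨c, -1, ?_, by simp⟩
      rw [mapQ_apply, ← Quotient.mk_smul, ← Quotient.mk_smul, ← Quotient.mk_add,
        Quotient.mk_eq_zero, ← hc]
      convert neg_mem (add_mem (smul_mem _ a h1) (smul_mem _ b hx)) using 1
      module)
  refine ⟨c, fun y => (Submodule.Quotient.eq U).1 ?_⟩
  simpa using LinearMap.congr_fun hc (U.mkQ y)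

theorem exists_linearMap_forall_sub_smul_mem_span (hA : 4 ≤ Module.rank k A)
    (m : A →ₗ[k] A →ₗ[k] A) (hm : ∀ x y, m x y ∈ span k {1, x, y}) (hm1 : ∀ y, m 1 y = y) :
    ∃ Λ : A →ₗ[k] k, Λ 1 = 1 ∧ ∀ x y, m x y - Λ x • y ∈ span k {1, x} := by
  choose c hc using exists_forall_sub_smul_mem_span m hm
  have hchar : ∀ {x y : A} {d : k} {U : Submodule k A}, span k {1, x} ≤ U → y ∉ U →
      m x y - d • y ∈ U → c x = d :=
    fun hle hy hd => smul_eq_of_sub_smul_mem hy (hle (hc _ _)) hd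
  refine ⟨{ toFun := c, map_add' := fun x x' => ?_, map_smul' := fun a x => ?_ }, ?_, hc⟩
  · obtain ⟨y, hy⟩ := exists_notMem_span_triple hA 1 x x'
    refine hchar (span_le.2 ?_) hy ?_
    · rintro _ (rfl | rfl)
      exacts [subset_span (by simp), add_mem (subset_span (by simp)) (subset_span (by simp))]
    · convert add_mem (span_mono (Set.insert_subset_insert
        (Set.singleton_subset_iff.2 (Set.mem_insert _ _))) (hc x y))
        (span_mono (Set.insert_subset_insert (Set.subset_insert _ _)) (hc x' y)) using 1
      simp only [map_add, LinearMap.add_apply]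
      module
  · obtain ⟨y, hy⟩ := exists_notMem_span_triple hA 1 x x
    rw [Set.pair_eq_singleton] at hy
    refine hchar (span_le.2 ?_) hy ?_
    · rintro _ (rfl | rfl)
      exacts [subset_span (by simp), smul_mem _ a (subset_span (by simp))]
    · convert smul_mem _ a (hc x y) using 1
      simp only [map_smul, LinearMap.smul_apply, RingHom.id_apply, smul_eq_mul]
      module
  · obtain ⟨y, hy⟩ := exists_notMem_span_triple hA 1 1 1
    simp only [Set.pair_eq_singleton] at hy
    refine hchar (span_le.2 ?_) hy ?_
    · simp
    · simp [hm1]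

theorem exists_mul_eq_smul_add_smul_add_smul_one (hA : 4 ≤ Module.rank k A)
    {Λ ρ : A →ₗ[k] k} (hΛ : ∀ x y : A, x * y - Λ x • y ∈ span k {1, x})
    (hρ : ∀ x y : A, y * x - ρ x • y ∈ span k {1, x}) (x y : A) :
    ∃ c : k, x * y = Λ x • y + ρ y • x + c • 1 := by
  have generic : ∀ y, y ∉ span k {1, x} → x * y - Λ x • y - ρ y • x ∈ k ∙ 1 := by
    intro y hy
    rw [span_insert] at hy
    refine mem_of_mem_sup_span_singleton_of_mem_sup_span_singleton ?_ ?_ hy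
    · rw [← span_insert]
      exact sub_mem (hΛ x y) (smul_mem _ _ (subset_span (by simp)))
    · rw [← span_insert]
      convert sub_mem (hρ y x) (smul_mem _ (Λ x) (subset_span (by simp) : y ∈ span k {1, y}))
        using 1
      abel
  obtain ⟨u, hu⟩ := exists_notMem_span_triple hA 1 x y
  have hsub : span k {1, x} ≤ span k {1, x, y} :=
    span_mono (Set.insert_subset_insert (Set.singleton_subset_iff.2 (Set.mem_insert _ _)))
  have hyu : y + u ∉ span k {1, x} := fun hmem =>
    hu (by simpa using sub_mem (hsub hmem) (subset_span (by simp) : y ∈ span k {1, x, y}))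
  obtain ⟨c, hc⟩ := mem_span_singleton.1
    (sub_mem (generic _ hyu) (generic u fun hmem => hu (hsub hmem)))
  refine ⟨c, ?_⟩
  rw [hc]
  simp only [mul_add, map_add]
  module

section Structure

variable {Λ ρ : A →ₗ[k] k} (hmul : ∀ x y : A, ∃ c : k, x * y = Λ x • y + ρ y • x + c • 1)
include hmul

theorem mul_eq_zero_of_mem_ker_inf_ker (hA : 4 ≤ Module.rank k A) {v w : A}
    (hv : v ∈ LinearMap.ker Λ ⊓ LinearMap.ker ρ) (hw : w ∈ LinearMap.ker Λ ⊓ LinearMap.ker ρ) :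
    v * w = 0 := by
  have hprod : ∀ {v w : A}, Λ v = 0 → ρ w = 0 → ∃ c : k, v * w = c • 1 := fun {v w} hv hw =>
    by simpa [hv, hw] using hmul v w
  obtain ⟨u, hu, huw⟩ := exists_mem_ker_inf_ker_notMem_span_singleton hA Λ ρ w
  obtain ⟨a, ha⟩ := hprod hu.1 hv.2
  obtain ⟨c, hc⟩ := hprod hv.1 hw.2
  have hassoc : a • w = c • u := by
    rw [← smul_one_mul, ← ha, mul_assoc, hc, mul_smul_one]
  rcases eq_or_ne c 0 with rfl | hc0
  · rw [hc, zero_smul]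
  · refine absurd ?_ huw
    rw [← inv_smul_smul₀ hc0 u, ← hassoc, smul_smul]
    exact smul_mem _ _ (mem_span_singleton_self w)

variable {q : A} (hq : Λ q = 1) (hq' : ρ q = 0)
include hq hq'

theorem mul_eq_self_of_mem_ker_inf_ker {v : A} (hv : v ∈ LinearMap.ker Λ ⊓ LinearMap.ker ρ) :
    q * v = v := by
  have hΛv : Λ v = 0 := hv.1
  have hρv : ρ v = 0 := hv.2
  obtain ⟨a, ha⟩ := hmul q q
  obtain ⟨b, hb⟩ := hmul q v
  simp only [hq, hq', hρv, one_smul, zero_smul, add_zero] at ha hb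
  have hassoc : a • v = b • q := by
    have key : (q * q) * v = q * (q * v) := mul_assoc q q v
    rw [ha, hb, add_mul, mul_add, smul_one_mul, mul_smul_one, hb] at key
    exact add_left_cancel key
  have hb0 : b = 0 := by simpa [hΛv, hq] using (congrArg Λ hassoc).symm
  rw [hb, hb0, zero_smul, add_zero]

theorem isIdempotentElem_of_mem_ker_inf_ker {v : A}
    (hv : v ∈ LinearMap.ker Λ ⊓ LinearMap.ker ρ) (hv0 : v ≠ 0) : IsIdempotentElem q := by
  obtain ⟨a, ha⟩ := hmul q q
  simp only [hq, hq', one_smul, zero_smul, add_zero] at ha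
  have hqv := mul_eq_self_of_mem_ker_inf_ker hmul hq hq' hv
  have hav : a • v = 0 := by
    have key : (q * q) * v = q * (q * v) := mul_assoc q q v
    rw [ha, hqv, hqv, add_mul, smul_one_mul, hqv] at key
    exact add_eq_left.1 key
  rw [IsIdempotentElem, ha, (smul_eq_zero.1 hav).resolve_right hv0, zero_smul, add_zero]

omit hq in
theorem mul_eq_zero_of_mem_ker_inf_ker_of_isIdempotentElem (hρ1 : ρ 1 = 1)
    (hqq : IsIdempotentElem q) {v : A} (hv : v ∈ LinearMap.ker Λ ⊓ LinearMap.ker ρ) :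
    v * q = 0 := by
  have hΛv : Λ v = 0 := hv.1
  obtain ⟨c, hc⟩ := hmul v q
  simp only [hΛv, hq', zero_smul, zero_add] at hc
  have hcq : c • q = c • 1 := by
    rw [← smul_one_mul, ← hc, mul_assoc, hqq.eq]
  have hc0 : c = 0 := by simpa [hq', hρ1] using (congrArg ρ hcq).symm
  rw [hc, hc0, zero_smul]

theorem exists_triangular_decomposition (hA : 4 ≤ Module.rank k A) (hΛ1 : Λ 1 = 1)
    (hρ1 : ρ 1 = 1) :
    ∃ (V : Submodule k A) (e f : A),
      e + f = 1 ∧ e * e = e ∧ f * f = f ∧ e * f = 0 ∧ f * e = 0 ∧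
      (∀ v ∈ V, e * v = 0 ∧ v * f = 0) ∧
      (∀ v ∈ V, ∀ w ∈ V, v * w = 0) ∧
      k ∙ e ⊔ k ∙ f ⊔ V = ⊤ ∧
      k ∙ e ⊓ (k ∙ f ⊔ V) = ⊥ ∧
      k ∙ f ⊓ (k ∙ e ⊔ V) = ⊥ ∧
      V ⊓ (k ∙ e ⊔ k ∙ f) = ⊥ := by
  obtain ⟨v₀, hv₀, hv₀0⟩ := exists_mem_ker_inf_ker_notMem_span_singleton hA Λ ρ 0
  have hqq := isIdempotentElem_of_mem_ker_inf_ker hmul hq hq' hv₀ (by simpa using hv₀0)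
  obtain ⟨htop, hpV, hqV, hVpq⟩ := span_sup_span_sup_ker_inf_ker_decomposition
    (p := 1 - q) (by simp [hq, hΛ1]) (by simp [hq', hρ1]) hq hq'
  refine ⟨_, 1 - q, q, sub_add_cancel 1 q, hqq.one_sub.eq, hqq.eq, ?_, ?_,
    fun v hv => ⟨?_, mul_eq_zero_of_mem_ker_inf_ker_of_isIdempotentElem hmul hq' hρ1 hqq hv⟩,
    fun v hv w hw => mul_eq_zero_of_mem_ker_inf_ker hmul hA hv hw, htop, hpV, hqV, hVpq⟩
  · rw [sub_mul, one_mul, hqq.eq, sub_self]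
  · rw [mul_sub, mul_one, hqq.eq, sub_self]
  · rw [sub_mul, one_mul, mul_eq_self_of_mem_ker_inf_ker hmul hq hq' hv, sub_self]

end Structure

end Algebra

/-- Let `k` be a field and `A` a (possibly noncommutative) unital `k`-algebra with
`dim_k A ≥ 4`. If `dim_k(k·1 + kx + ky + kxy) ≤ 3` for all `x, y ∈ A`, then either
`A = k ⊕ V` with `V·V = 0`, or `A ≅ [[k, V],[0, k]]`, i.e. `A = ke ⊕ kf ⊕ V` with `e`, `f`
orthogonal idempotents summing to `1` and `eV = Vf = 0`, `V·V = 0`. -/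
theorem stmt19 (k A : Type*) [Field k] [Ring A] [Algebra k A]
    (hA : 4 ≤ Module.rank k A)
    (h : ∀ x y : A, Module.rank k
      (Submodule.span k {(1 : A), x, y, x * y} : Submodule k A) ≤ 3) :
    (∃ V : Submodule k A,
      Submodule.span k {(1 : A)} ⊔ V = ⊤ ∧
      Submodule.span k {(1 : A)} ⊓ V = ⊥ ∧
      ∀ v ∈ V, ∀ w ∈ V, v * w = 0) ∨
    (∃ (V : Submodule k A) (e f : A),
      e + f = 1 ∧ e * e = e ∧ f * f = f ∧ e * f = 0 ∧ f * e = 0 ∧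
      (∀ v ∈ V, e * v = 0 ∧ v * f = 0) ∧
      (∀ v ∈ V, ∀ w ∈ V, v * w = 0) ∧
      Submodule.span k {e} ⊔ Submodule.span k {f} ⊔ V = ⊤ ∧
      Submodule.span k {e} ⊓ (Submodule.span k {f} ⊔ V) = ⊥ ∧
      Submodule.span k {f} ⊓ (Submodule.span k {e} ⊔ V) = ⊥ ∧
      V ⊓ (Submodule.span k {e} ⊔ Submodule.span k {f}) = ⊥) := by
  have hP := mul_mem_span hA h
  obtain ⟨Λ, hΛ1, hΛ⟩ := exists_linearMap_forall_sub_smul_mem_span hA (LinearMap.mul k A)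
    (by simpa using hP) (by simp)
  obtain ⟨ρ, hρ1, hρ⟩ := exists_linearMap_forall_sub_smul_mem_span hA (LinearMap.mul k A).flip
    (fun x y => by simpa [Set.pair_comm] using hP y x) (by simp)
  have hmul := exists_mul_eq_smul_add_smul_add_smul_one hA (by simpa using hΛ) (by simpa using hρ)
  by_cases hΛρ : Λ = ρ
  · subst hΛρ
    have hcompl := isCompl_span_singleton_ker (Λ := Λ) (x := 1) (by simp [hΛ1])
    exact Or.inl ⟨LinearMap.ker Λ, hcompl.sup_eq_top, hcompl.inf_eq_bot,
      fun v hv w hw => mul_eq_zero_of_mem_ker_inf_ker hmul hA ⟨hv, hv⟩ ⟨hw, hw⟩⟩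
  · obtain ⟨q, hq, hq'⟩ := exists_apply_eq_one_apply_eq_zero hΛρ hΛ1 hρ1
    exact Or.inr (exists_triangular_decomposition hmul hq hq' hA hΛ1 hρ1)
end
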